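/- arXiv:2211.06062 — 8 statements merged into one kernel-verified Lean document; each statement's English description precedes it below -/
import Mathlib

section
/- If a, b are coprime squarefree positive integers and c is a positive integer with abc cubefree, then setting A = a·gcd(b,c)²/gcd(a,c), B = b·gcd(a,c)²/gcd(b,c), C = c/gcd(ab,c), the integers A, B, C are pairwise coprime cubefree positive integers, and the equation ab²X³ + a²bY³ + abcZ³ = 0 has a nontrivial rational solution if and only if AX³ + BY³ + CZ³ = 0 does. -/
private lemma sqf_cop_div {n d : ℕ} (hn : Squarefree n) (hd : d ∣ n) :
    Nat.Coprime d (n / d) := by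
  have h2 : Nat.gcd d (n / d) * Nat.gcd d (n / d) ∣ n := by
    calc Nat.gcd d (n / d) * Nat.gcd d (n / d) ∣ d * (n / d) :=
          mul_dvd_mul (Nat.gcd_dvd_left _ _) (Nat.gcd_dvd_right _ _)
      _ = n := Nat.mul_div_cancel' hd
  exact Nat.isUnit_iff.mp (hn _ h2)

private lemma not_cop_prime {m n : ℕ} (h : ¬ Nat.Coprime m n) :
    ∃ p : ℕ, p.Prime ∧ p ∣ m ∧ p ∣ n := by
  obtain ⟨p, hp, hpd⟩ := Nat.exists_prime_and_dvd h
  exact ⟨p, hp, hpd.trans (Nat.gcd_dvd_left _ _), hpd.trans (Nat.gcd_dvd_right _ _)⟩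

/-- for coprime squarefree positive `a, b` and positive `c` with `abc`
cubefree, setting `A = a·gcd(b,c)²/gcd(a,c)`, `B = b·gcd(a,c)²/gcd(b,c)`,
`C = c/gcd(ab,c)`, the triple `(A,B,C)` consists of pairwise coprime cubefree
positive integers, and `ab²X³ + a²bY³ + abcZ³ = 0` has a nontrivial rational
solution iff `AX³ + BY³ + CZ³ = 0` does. -/
theorem selmer_representative (a b c : ℕ) (ha : 0 < a) (hb : 0 < b) (hc : 0 < c)
    (hab : Nat.Coprime a b) (hsa : Squarefree a) (hsb : Squarefree b)
    (hcube : ∀ p : ℕ, p.Prime → ¬ p ^ 3 ∣ a * b * c) :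
    let A : ℕ := a * Nat.gcd b c ^ 2 / Nat.gcd a c
    let B : ℕ := b * Nat.gcd a c ^ 2 / Nat.gcd b c
    let C : ℕ := c / Nat.gcd (a * b) c
    (0 < A ∧ 0 < B ∧ 0 < C ∧
      Nat.Coprime A B ∧ Nat.Coprime A C ∧ Nat.Coprime B C ∧
      (∀ p : ℕ, p.Prime → ¬ p ^ 3 ∣ A) ∧
      (∀ p : ℕ, p.Prime → ¬ p ^ 3 ∣ B) ∧
      (∀ p : ℕ, p.Prime → ¬ p ^ 3 ∣ C)) ∧
    ((∃ X Y Z : ℚ, (X, Y, Z) ≠ (0, 0, 0) ∧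
        (a : ℚ) * (b : ℚ) ^ 2 * X ^ 3 + (a : ℚ) ^ 2 * (b : ℚ) * Y ^ 3 +
          (a : ℚ) * (b : ℚ) * (c : ℚ) * Z ^ 3 = 0) ↔
      (∃ X Y Z : ℚ, (X, Y, Z) ≠ (0, 0, 0) ∧
        (A : ℚ) * X ^ 3 + (B : ℚ) * Y ^ 3 + (C : ℚ) * Z ^ 3 = 0)) := by
  intro A B C
  set d1 := Nat.gcd a c with hd1
  set d2 := Nat.gcd b c with hd2
  have hd1a : d1 ∣ a := Nat.gcd_dvd_left _ _
  have hd1c : d1 ∣ c := Nat.gcd_dvd_right _ _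
  have hd2b : d2 ∣ b := Nat.gcd_dvd_left _ _
  have hd2c : d2 ∣ c := Nat.gcd_dvd_right _ _
  have hd1pos : 0 < d1 := Nat.gcd_pos_of_pos_left _ ha
  have hd2pos : 0 < d2 := Nat.gcd_pos_of_pos_left _ hb
  -- basic prime tools
  have pab : ∀ p : ℕ, p.Prime → p ∣ a → p ∣ b → False := by
    intro p hp h1 h2
    have : p = 1 := Nat.Coprime.eq_one_of_dvd (Nat.Coprime.coprime_dvd_left h1 hab) h2
    have := hp.one_lt; omega
  have sqa : ∀ p : ℕ, p.Prime → p * p ∣ a → False := fun p hp h => hp.not_isUnit (hsa p h)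
  have sqb : ∀ p : ℕ, p.Prime → p * p ∣ b → False := fun p hp h => hp.not_isUnit (hsb p h)
  -- gcd (a*b) c = d1 * d2
  have hgab : Nat.gcd (a * b) c = d1 * d2 := by
    rw [Nat.gcd_comm (a*b) c, Nat.Coprime.gcd_mul c hab, Nat.gcd_comm c a, Nat.gcd_comm c b]
  have hd12c : d1 * d2 ∣ c := hgab ▸ Nat.gcd_dvd_right (a*b) c
  -- exact-division identities
  have hA : A * d1 = a * d2 ^ 2 := Nat.div_mul_cancel (hd1a.mul_right _)
  have hB : B * d2 = b * d1 ^ 2 := Nat.div_mul_cancel (hd2b.mul_right _)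
  have hC : C * (d1 * d2) = c := by
    show c / Nat.gcd (a*b) c * (d1 * d2) = c
    rw [hgab]; exact Nat.div_mul_cancel hd12c
  -- factorizations
  set a1 := a / d1 with ha1def
  set b1 := b / d2 with hb1def
  have ha1 : a1 * d1 = a := Nat.div_mul_cancel hd1a
  have hb1 : b1 * d2 = b := Nat.div_mul_cancel hd2b
  have hA' : A = a1 * d2 ^ 2 := by
    have h' : (a1 * d2 ^ 2) * d1 = a * d2 ^ 2 := by rw [mul_right_comm, ha1]
    exact Nat.eq_of_mul_eq_mul_right hd1pos (hA.trans h'.symm)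
  have hB' : B = b1 * d1 ^ 2 := by
    have h' : (b1 * d1 ^ 2) * d2 = b * d1 ^ 2 := by rw [mul_right_comm, hb1]
    exact Nat.eq_of_mul_eq_mul_right hd2pos (hB.trans h'.symm)
  have hApos : 0 < A := by
    have := Nat.mul_pos ha (pow_pos hd2pos 2)
    rcases Nat.eq_zero_or_pos A with h | h
    · rw [h, zero_mul] at hA; omega
    · exact h
  have hBpos : 0 < B := by
    have := Nat.mul_pos hb (pow_pos hd1pos 2)
    rcases Nat.eq_zero_or_pos B with h | h
    · rw [h, zero_mul] at hB; omega
    · exact h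
  have hCpos : 0 < C := by
    rcases Nat.eq_zero_or_pos C with h | h
    · rw [h, zero_mul] at hC; omega
    · exact h
  -- divisor-splitting for primes
  have splitA : ∀ p : ℕ, p.Prime → p ∣ A → p ∣ a1 ∨ p ∣ d2 := by
    intro p hp h
    rw [hA'] at h
    rcases hp.dvd_mul.mp h with h | h
    · exact Or.inl h
    · exact Or.inr (hp.dvd_of_dvd_pow h)
  have splitB : ∀ p : ℕ, p.Prime → p ∣ B → p ∣ b1 ∨ p ∣ d1 := by
    intro p hp h
    rw [hB'] at h
    rcases hp.dvd_mul.mp h with h | h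
    · exact Or.inl h
    · exact Or.inr (hp.dvd_of_dvd_pow h)
  have hCc : C ∣ c := ⟨d1 * d2, hC.symm⟩
  -- p ∣ C combined with p ∣ d1 or d2 gives p^2 ∣ c
  have sqc1 : ∀ p : ℕ, p ∣ C → p ∣ d1 → p * p ∣ c := by
    intro p h1 h2
    have : p * p ∣ C * d1 := mul_dvd_mul h1 h2
    exact this.trans (⟨d2, by rw [← hC]; ring⟩)
  have sqc2 : ∀ p : ℕ, p ∣ C → p ∣ d2 → p * p ∣ c := by
    intro p h1 h2
    have : p * p ∣ C * d2 := mul_dvd_mul h1 h2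
    exact this.trans (⟨d1, by rw [← hC]; ring⟩)
  -- coprimalities
  have hcopAB : Nat.Coprime A B := by
    by_contra h
    obtain ⟨p, hp, hpA, hpB⟩ := not_cop_prime h
    rcases splitA p hp hpA with h1 | h1 <;> rcases splitB p hp hpB with h2 | h2
    · exact pab p hp (h1.trans ⟨d1, ha1.symm⟩) (h2.trans ⟨d2, hb1.symm⟩)
    · exact sqa p hp (ha1 ▸ mul_dvd_mul h1 h2)
    · exact sqb p hp (hb1 ▸ mul_dvd_mul h2 h1)
    · exact pab p hp (h2.trans hd1a) (h1.trans hd2b)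
  have hcopAC : Nat.Coprime A C := by
    by_contra h
    obtain ⟨p, hp, hpA, hpC⟩ := not_cop_prime h
    have hpc : p ∣ c := hpC.trans hCc
    rcases splitA p hp hpA with h1 | h1
    · have hpd1 : p ∣ d1 := Nat.dvd_gcd (h1.trans ⟨d1, ha1.symm⟩) hpc
      exact sqa p hp (ha1 ▸ mul_dvd_mul h1 hpd1)
    · have h3 : p ^ 3 ∣ b * c := by
        have : p * (p * p) ∣ b * c := mul_dvd_mul (h1.trans hd2b) (sqc2 p hpC h1)
        calc p ^ 3 = p * (p * p) := by ring
          _ ∣ b * c := this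
      refine hcube p hp ?_
      have h4 : p ^ 3 ∣ a * (b * c) := h3.mul_left a
      rwa [← mul_assoc] at h4
  have hcopBC : Nat.Coprime B C := by
    by_contra h
    obtain ⟨p, hp, hpB, hpC⟩ := not_cop_prime h
    have hpc : p ∣ c := hpC.trans hCc
    rcases splitB p hp hpB with h1 | h1
    · have hpd2 : p ∣ d2 := Nat.dvd_gcd (h1.trans ⟨d2, hb1.symm⟩) hpc
      exact sqb p hp (hb1 ▸ mul_dvd_mul h1 hpd2)
    · have h3 : p ^ 3 ∣ a * c := by
        have : p * (p * p) ∣ a * c := mul_dvd_mul (h1.trans hd1a) (sqc1 p hpC h1)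
        calc p ^ 3 = p * (p * p) := by ring
          _ ∣ a * c := this
      refine hcube p hp ?_
      have : p ^ 3 ∣ (a * c) * b := h3.mul_right b
      have e : (a * c) * b = a * b * c := by ring
      rwa [e] at this
  -- cubefree
  have hcubeA : ∀ p : ℕ, p.Prime → ¬ p ^ 3 ∣ A := by
    intro p hp h3
    have h3' : p ^ 3 ∣ a * d2 ^ 2 := (h3.trans ⟨d1, hA.symm⟩)
    have hpd : p ∣ a * d2 ^ 2 := (dvd_pow_self p (by norm_num : (3:ℕ) ≠ 0)).trans h3'
    rcases hp.dvd_mul.mp hpd with hpa | hpd2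
    · have hpnd2 : ¬ p ∣ d2 := fun hh => pab p hp hpa (hh.trans hd2b)
      have hcp : Nat.Coprime (p ^ 3) (d2 ^ 2) :=
        Nat.Coprime.pow 3 2 ((Nat.Prime.coprime_iff_not_dvd hp).mpr hpnd2)
      have : p ^ 3 ∣ a := hcp.dvd_of_dvd_mul_right h3'
      exact sqa p hp (by
        have h2 : p ^ 2 ∣ a := (pow_dvd_pow p (by norm_num : 2 ≤ 3)).trans this
        rwa [pow_two] at h2)
    · have hpd2' : p ∣ d2 := hp.dvd_of_dvd_pow hpd2
      have hpna : ¬ p ∣ a := fun hh => pab p hp hh (hpd2'.trans hd2b)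
      have hcp : Nat.Coprime (p ^ 3) a :=
        Nat.Coprime.pow_left 3 ((Nat.Prime.coprime_iff_not_dvd hp).mpr hpna)
      have hdd : p ^ 3 ∣ d2 ^ 2 := hcp.dvd_of_dvd_mul_left h3'
      -- d2 squarefree
      have sd2 : Squarefree d2 := hsb.squarefree_of_dvd hd2b
      set e := d2 / p with hedef
      have hpe : p * e = d2 := Nat.mul_div_cancel' hpd2'
      have hcpe : Nat.Coprime p e := sqf_cop_div sd2 hpd2'
      have : p ^ 2 * p ∣ p ^ 2 * e ^ 2 := by
        have e1 : p ^ 2 * p = p ^ 3 := by ring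
        have e2 : p ^ 2 * e ^ 2 = d2 ^ 2 := by rw [← hpe]; ring
        rw [e1, e2]; exact hdd
      have hpe2 : p ∣ e ^ 2 := (Nat.mul_dvd_mul_iff_left (pow_pos hp.pos 2)).mp this
      have hpee : p ∣ e := hp.dvd_of_dvd_pow hpe2
      have : p = 1 := Nat.Coprime.eq_one_of_dvd hcpe hpee
      have := hp.one_lt; omega
  have hcubeB : ∀ p : ℕ, p.Prime → ¬ p ^ 3 ∣ B := by
    intro p hp h3
    have h3' : p ^ 3 ∣ b * d1 ^ 2 := (h3.trans ⟨d2, hB.symm⟩)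
    have hpd : p ∣ b * d1 ^ 2 := (dvd_pow_self p (by norm_num : (3:ℕ) ≠ 0)).trans h3'
    rcases hp.dvd_mul.mp hpd with hpb | hpd1
    · have hpnd1 : ¬ p ∣ d1 := fun hh => pab p hp (hh.trans hd1a) hpb
      have hcp : Nat.Coprime (p ^ 3) (d1 ^ 2) :=
        Nat.Coprime.pow 3 2 ((Nat.Prime.coprime_iff_not_dvd hp).mpr hpnd1)
      have : p ^ 3 ∣ b := hcp.dvd_of_dvd_mul_right h3'
      exact sqb p hp (by
        have h2 : p ^ 2 ∣ b := (pow_dvd_pow p (by norm_num : 2 ≤ 3)).trans this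
        rwa [pow_two] at h2)
    · have hpd1' : p ∣ d1 := hp.dvd_of_dvd_pow hpd1
      have hpnb : ¬ p ∣ b := fun hh => pab p hp (hpd1'.trans hd1a) hh
      have hcp : Nat.Coprime (p ^ 3) b :=
        Nat.Coprime.pow_left 3 ((Nat.Prime.coprime_iff_not_dvd hp).mpr hpnb)
      have hdd : p ^ 3 ∣ d1 ^ 2 := hcp.dvd_of_dvd_mul_left h3'
      have sd1 : Squarefree d1 := hsa.squarefree_of_dvd hd1a
      set e := d1 / p with hedef
      have hpe : p * e = d1 := Nat.mul_div_cancel' hpd1'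
      have hcpe : Nat.Coprime p e := sqf_cop_div sd1 hpd1'
      have : p ^ 2 * p ∣ p ^ 2 * e ^ 2 := by
        have e1 : p ^ 2 * p = p ^ 3 := by ring
        have e2 : p ^ 2 * e ^ 2 = d1 ^ 2 := by rw [← hpe]; ring
        rw [e1, e2]; exact hdd
      have hpe2 : p ∣ e ^ 2 := (Nat.mul_dvd_mul_iff_left (pow_pos hp.pos 2)).mp this
      have hpee : p ∣ e := hp.dvd_of_dvd_pow hpe2
      have : p = 1 := Nat.Coprime.eq_one_of_dvd hcpe hpee
      have := hp.one_lt; omega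
  have hcubeC : ∀ p : ℕ, p.Prime → ¬ p ^ 3 ∣ C := by
    intro p hp h3
    exact hcube p hp ((h3.trans hCc).trans ⟨a * b, by ring⟩)
  refine ⟨⟨hApos, hBpos, hCpos, hcopAB, hcopAC, hcopBC, hcubeA, hcubeB, hcubeC⟩, ?_⟩
  -- rational part
  have d1q : (d1 : ℚ) ≠ 0 := Nat.cast_ne_zero.mpr hd1pos.ne'
  have d2q : (d2 : ℚ) ≠ 0 := Nat.cast_ne_zero.mpr hd2pos.ne'
  have aq : (a : ℚ) ≠ 0 := Nat.cast_ne_zero.mpr ha.ne'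
  have bq : (b : ℚ) ≠ 0 := Nat.cast_ne_zero.mpr hb.ne'
  have qA : (A : ℚ) * d1 = (a : ℚ) * (d2 : ℚ) ^ 2 := by exact_mod_cast congrArg (Nat.cast : ℕ → ℚ) hA
  have qB : (B : ℚ) * d2 = (b : ℚ) * (d1 : ℚ) ^ 2 := by exact_mod_cast congrArg (Nat.cast : ℕ → ℚ) hB
  have qC : (C : ℚ) * ((d1 : ℚ) * d2) = (c : ℚ) := by exact_mod_cast congrArg (Nat.cast : ℕ → ℚ) hC
  have qAd : (A : ℚ) = (a : ℚ) * (d2 : ℚ) ^ 2 / d1 := by field_simp [qA]; exact qA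
  have qBd : (B : ℚ) = (b : ℚ) * (d1 : ℚ) ^ 2 / d2 := by field_simp [qB]; exact qB
  have qCd : (C : ℚ) = (c : ℚ) / ((d1 : ℚ) * d2) := by field_simp; linarith [qC]
  constructor
  · rintro ⟨X, Y, Z, hne, heq⟩
    refine ⟨Y / d2, X / d1, Z, ?_, ?_⟩
    · simp only [ne_eq, Prod.mk.injEq, not_and] at hne ⊢
      intro h1 h2
      rw [div_eq_zero_iff] at h1 h2
      intro h3
      exact hne (h2.resolve_right d1q) (h1.resolve_right d2q) h3
    · have hE : (b : ℚ) * X ^ 3 + (a : ℚ) * Y ^ 3 + (c : ℚ) * Z ^ 3 = 0 := by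
        have := heq
        have hne' : (a : ℚ) * b ≠ 0 := mul_ne_zero aq bq
        have : (a : ℚ) * b * ((b : ℚ) * X ^ 3 + (a : ℚ) * Y ^ 3 + (c : ℚ) * Z ^ 3) = 0 := by
          linear_combination heq
        exact (mul_eq_zero.mp this).resolve_left hne'
      rw [qAd, qBd, qCd]
      field_simp
      linear_combination hE
      
  · rintro ⟨X, Y, Z, hne, heq⟩
    refine ⟨(d1 : ℚ) * Y, (d2 : ℚ) * X, Z, ?_, ?_⟩
    · simp only [ne_eq, Prod.mk.injEq, not_and] at hne ⊢
      intro h1 h2 h3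
      rw [mul_eq_zero] at h1 h2
      exact hne (h2.resolve_left d2q) (h1.resolve_left d1q) h3
    · have key : (b : ℚ) * ((d1:ℚ) * Y) ^ 3 + (a : ℚ) * ((d2:ℚ) * X) ^ 3 + (c : ℚ) * Z ^ 3 = 0 := by
        linear_combination (d1:ℚ) * (d2:ℚ) * heq - (d1:ℚ) * Y^3 * qB - (d2:ℚ) * X^3 * qA - Z^3 * qC
      linear_combination (a:ℚ) * (b:ℚ) * key
end

section
/- Let k ≥ 1 and define Φ_k : F_3^{2k} × F_3^{2k} → F_3 by Φ_k(u,v) = v_2 · (u_1 − v_1). Every maximal unlinked set S ⊆ F_3^{2k} (with respect to Φ_k) has cardinality exactly 3^k. -/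
/-!
Let `W` be the span of the differences `u₁ - v₁` of first coordinates of an unlinked set `S`.
Unlinkedness says that every second coordinate is orthogonal to these differences, so `S` lies in
`(a + W) × W^⊥` for any `(a, b) ∈ S`; and that set is itself unlinked, since the difference of
two of its first coordinates lies in `W`. Hence a maximal `S` equals `(a + W) × W^⊥`, which has
`3 ^ dim W * 3 ^ (k - dim W) = 3 ^ k` elements because the dot product is nondegenerate.
-/

open Matrix Module LinearMap
open scoped Pointwise

section CommRing

variable {R ι : Type*} [CommRing R] [Fintype ι]

def IsUnlinked (S : Set ((ι → R) × (ι → R))) : Prop :=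
  ∀ u ∈ S, ∀ v ∈ S, v.2 ⬝ᵥ (u.1 - v.1) = 0 ∧ u.2 ⬝ᵥ (v.1 - u.1) = 0

def dotOrthogonal (W : Submodule R (ι → R)) : Submodule R (ι → R) :=
  BilinForm.orthogonal (dotProductBilin R R) W

theorem mem_dotOrthogonal_iff {W : Submodule R (ι → R)} {y : ι → R} :
    y ∈ dotOrthogonal W ↔ ∀ x ∈ W, y ⬝ᵥ x = 0 := by
  simp [dotOrthogonal, BilinForm.mem_orthogonal_iff, dotProduct_comm]

/-- The translate by `(a, 0)` of the Lagrangian subspace `W × W^⊥` of `R^ι × R^ι`. -/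
def lagrangianSet (a : ι → R) (W : Submodule R (ι → R)) : Set ((ι → R) × (ι → R)) :=
  {p | p.1 - a ∈ W ∧ p.2 ∈ dotOrthogonal W}

theorem sub_fst_mem_of_mem_lagrangianSet {a : ι → R} {W : Submodule R (ι → R)}
    {u v : (ι → R) × (ι → R)} (hu : u ∈ lagrangianSet a W) (hv : v ∈ lagrangianSet a W) :
    u.1 - v.1 ∈ W := by
  simpa using W.sub_mem hu.1 hv.1

theorem isUnlinked_lagrangianSet (a : ι → R) (W : Submodule R (ι → R)) :
    IsUnlinked (lagrangianSet a W) := fun _ hu _ hv =>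
  ⟨mem_dotOrthogonal_iff.1 hv.2 _ (sub_fst_mem_of_mem_lagrangianSet hu hv),
    mem_dotOrthogonal_iff.1 hu.2 _ (sub_fst_mem_of_mem_lagrangianSet hv hu)⟩

theorem IsUnlinked.subset_lagrangianSet {S : Set ((ι → R) × (ι → R))} (hS : IsUnlinked S)
    {p₀ : (ι → R) × (ι → R)} (hp₀ : p₀ ∈ S) :
    S ⊆ lagrangianSet p₀.1 (Submodule.span R ((fun p => p.1 - p₀.1) '' S)) := by
  intro p hp
  refine ⟨Submodule.subset_span ⟨p, hp, rfl⟩, mem_dotOrthogonal_iff.2 fun x hx => ?_⟩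
  induction hx using Submodule.span_induction with
  | mem _ hq =>
    obtain ⟨q, hq, rfl⟩ := hq
    change p.2 ⬝ᵥ (q.1 - p₀.1) = 0
    rw [← sub_sub_sub_cancel_right q.1 p₀.1 p.1, dotProduct_sub, (hS p hp q hq).2,
      (hS p hp p₀ hp₀).2, sub_zero]
  | zero => exact dotProduct_zero _
  | add x y _ _ hx hy => rw [dotProduct_add, hx, hy, add_zero]
  | smul c x _ hx => rw [dotProduct_smul, hx, smul_zero]

theorem IsUnlinked.exists_subset_lagrangianSet {S : Set ((ι → R) × (ι → R))}
    (hS : IsUnlinked S) : ∃ a W, S ⊆ lagrangianSet a W := by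
  rcases S.eq_empty_or_nonempty with rfl | ⟨p₀, hp₀⟩
  · exact ⟨0, ⊥, Set.empty_subset _⟩
  · exact ⟨_, _, hS.subset_lagrangianSet hp₀⟩

end CommRing

section Field

variable {K ι : Type*} [Field K] [Fintype ι]

theorem nondegenerate_dotProductBilin :
    (dotProductBilin K K : LinearMap.BilinForm K (ι → K)).Nondegenerate :=
  ⟨fun x hx => dotProduct_eq_zero x hx,
    fun y hy => dotProduct_eq_zero y fun x => by rw [dotProduct_comm]; exact hy x⟩

theorem finrank_add_finrank_dotOrthogonal (W : Submodule K (ι → K)) :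
    finrank K W + finrank K (dotOrthogonal W) = Fintype.card ι := by
  rw [dotOrthogonal, BilinForm.finrank_orthogonal nondegenerate_dotProductBilin,
    finrank_fintype_fun_eq_card]
  have := finrank_fintype_fun_eq_card (R := K) (η := ι) ▸ W.finrank_le
  omega

theorem lagrangianSet_eq_vadd (a : ι → K) (W : Submodule K (ι → K)) :
    lagrangianSet a W =
      (a, (0 : ι → K)) +ᵥ ((W : Set (ι → K)) ×ˢ (dotOrthogonal W : Set (ι → K))) := by
  ext p
  simp [lagrangianSet, Set.mem_vadd_set_iff_neg_vadd_mem, sub_eq_neg_add, mem_dotOrthogonal_iff]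

theorem ncard_lagrangianSet (a : ι → K) (W : Submodule K (ι → K)) :
    (lagrangianSet a W).ncard = Nat.card K ^ Fintype.card ι := by
  rw [lagrangianSet_eq_vadd, Set.ncard_vadd_set, Set.ncard_prod, ← Nat.card_coe_set_eq,
    ← Nat.card_coe_set_eq, SetLike.coe_sort_coe, SetLike.coe_sort_coe,
    natCard_eq_pow_finrank (K := K) (V := W),
    natCard_eq_pow_finrank (K := K) (V := dotOrthogonal W), ← pow_add,
    finrank_add_finrank_dotOrthogonal]

end Field

theorem card_max_unlinked_set_general (k : ℕ)
    (S : Set ((Fin k → ZMod 3) × (Fin k → ZMod 3)))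
    (hS : ∀ u ∈ S, ∀ v ∈ S,
      dotProduct v.2 (u.1 - v.1) = 0 ∧ dotProduct u.2 (v.1 - u.1) = 0)
    (hmax : ∀ T : Set ((Fin k → ZMod 3) × (Fin k → ZMod 3)),
      (∀ u ∈ T, ∀ v ∈ T,
        dotProduct v.2 (u.1 - v.1) = 0 ∧ dotProduct u.2 (v.1 - u.1) = 0) →
      S ⊆ T → T = S) :
    S.ncard = 3 ^ k := by
  obtain ⟨a, W, hSW⟩ := IsUnlinked.exists_subset_lagrangianSet hS
  rw [← hmax _ (isUnlinked_lagrangianSet a W) hSW, ncard_lagrangianSet, Nat.card_zmod,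
    Fintype.card_fin]

/-- every maximal unlinked set in `F_3^{2k}` with respect to
`Φ_k(u,v) = v₂ · (u₁ - v₁)` has cardinality `3^k`. -/
theorem card_max_unlinked_set (k : ℕ) (hk : 1 ≤ k)
    (S : Set ((Fin k → ZMod 3) × (Fin k → ZMod 3)))
    (hS : ∀ u ∈ S, ∀ v ∈ S,
      dotProduct v.2 (u.1 - v.1) = 0 ∧ dotProduct u.2 (v.1 - u.1) = 0)
    (hmax : ∀ T : Set ((Fin k → ZMod 3) × (Fin k → ZMod 3)),
      (∀ u ∈ T, ∀ v ∈ T,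
        dotProduct v.2 (u.1 - v.1) = 0 ∧ dotProduct u.2 (v.1 - u.1) = 0) →
      S ⊆ T → T = S) :
    S.ncard = 3 ^ k :=
  card_max_unlinked_set_general k S hS hmax
end

section
/- Let K = Q(√−3) and ρ = (−1+√−3)/2. For a positive integer u coprime to 3, the cubic residue symbol (ρ/u)_3 equals 1 if and only if u ≡ ±1 mod 9. -/
/-!
`ℤ[ρ]` is the ring of integers of `ℚ(ζ₃)`, hence a principal ideal domain. For a prime `π ∤ 3`,
Euler's criterion determines `(ρ/π)₃ = ρ^((Nπ - 1)/3)` exactly, because distinct cube roots of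
unity differ by a divisor of `3`. Norms of elements prime to `3` are `≡ 1 mod 3`, so
`z ↦ ρ^((Nz - 1)/3)` is multiplicative on them, and unique factorization extends the formula to
every `z` prime to `3` (units included, by comparing `(ρ/π)₃` with `(ρ/πv)₃`). For `z = u` it reads
`(ρ/u)₃ = ρ^((u² - 1)/3)`, which is `1` iff `9 ∣ u² - 1`, i.e. `u ≡ ±1 mod 9`.
-/

open Polynomial

noncomputable section

/-- The ring of integers `ℤ[ρ]` of `ℚ(√-3)`, realized as `ℤ[X]/(X²+X+1)`. -/
abbrev Eis : Type := AdjoinRoot (X ^ 2 + X + 1 : Polynomial ℤ)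

/-- `ρ = (−1+√−3)/2`, a primitive cube root of unity. -/
def ρ : Eis := AdjoinRoot.root _

lemma ρ_rel : ρ ^ 2 + ρ + 1 = 0 := by
  have h := AdjoinRoot.eval₂_root (X ^ 2 + X + 1 : Polynomial ℤ)
  simpa [ρ, eval₂_add, eval₂_pow, eval₂_X, eval₂_one] using h

/-- The absolute norm `N : ℤ[ρ] → ℕ`. -/
def eisNorm (α : Eis) : ℕ := (Algebra.norm ℤ α).natAbs

open NumberField IsCyclotomicExtension

lemma sub_dvd_three_of_pow_three_eq_one {R : Type*} [CommRing R] [IsDomain R] {x y : R}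
    (hx : x ^ 3 = 1) (hy : y ^ 3 = 1) (hxy : x ≠ y) : x - y ∣ 3 := by
  have hsum : x ^ 2 + x * y + y ^ 2 = 0 := by
    have h : (x - y) * (x ^ 2 + x * y + y ^ 2) = 0 := by linear_combination hx - hy
    exact (mul_eq_zero.mp h).resolve_left (sub_ne_zero.mpr hxy)
  -- `3 = 3 y³` and `3 y² = (x² + x y + y²) - (x - y) (x + 2 y)`
  exact ⟨-(x + 2 * y) * y, by linear_combination y * hsum - 3 * hy⟩

lemma eq_of_dvd_sub_of_pow_three_eq_one {R : Type*} [CommRing R] [IsDomain R] {π x y : R}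
    (hπ : ¬ π ∣ 3) (hx : x ^ 3 = 1) (hy : y ^ 3 = 1) (h : π ∣ x - y) : x = y := by
  by_contra hxy
  exact hπ (h.trans (sub_dvd_three_of_pow_three_eq_one hx hy hxy))

lemma pow_mul_div_three {M : Type*} [Monoid M] {x : M} (hx : x ^ 3 = 1) {m n : ℕ}
    (hm : m % 3 = 1) (hn : n % 3 = 1) : x ^ (m * n / 3) = x ^ (m / 3) * x ^ (n / 3) := by
  obtain ⟨s, rfl⟩ : ∃ s, m = 3 * s + 1 := ⟨m / 3, by omega⟩
  obtain ⟨t, rfl⟩ : ∃ t, n = 3 * t + 1 := ⟨n / 3, by omega⟩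
  have hdiv : (3 * s + 1) * (3 * t + 1) / 3 = 3 * (s * t) + (s + t) := by
    rw [show (3 * s + 1) * (3 * t + 1) = 3 * (3 * (s * t) + (s + t)) + 1 by ring]
    omega
  rw [hdiv, pow_add, pow_mul, hx, one_pow, one_mul, ← pow_add]
  congr 1
  omega

lemma three_dvd_sq_div_three_iff {u : ℕ} (hu : Nat.Coprime u 3) :
    3 ∣ u ^ 2 / 3 ↔ u % 9 = 1 ∨ u % 9 = 8 := by
  have h3 : u % 3 ≠ 0 := fun h =>
    (Nat.Prime.coprime_iff_not_dvd Nat.prime_three).mp hu.symm (Nat.dvd_of_mod_eq_zero h)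
  have hsq : u ^ 2 % 9 = (u % 9) ^ 2 % 9 := Nat.pow_mod u 2 9
  have h9 : u % 9 < 9 := Nat.mod_lt _ (by norm_num)
  interval_cases h : u % 9 <;> omega

-- Instance search misses this: it is stated for `CyclotomicField.algebra`, which is not reducibly
-- defeq to the `DivisionRing.toRatAlgebra` that the search picks.
instance : IsCyclotomicExtension {3} ℚ (CyclotomicField 3 ℚ) :=
  CyclotomicField.isCyclotomicExtension 3 ℚ

lemma cyclotomic_three_int : cyclotomic 3 ℤ = X ^ 2 + X + 1 := by
  rw [cyclotomic_prime, Finset.sum_range_succ, Finset.sum_range_succ, Finset.sum_range_one]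
  ring

lemma minpoly_zeta_three_toInteger :
    minpoly ℤ (zeta_spec 3 ℚ (CyclotomicField 3 ℚ)).toInteger = X ^ 2 + X + 1 := by
  rw [← RingOfIntegers.minpoly_coe, ← cyclotomic_three_int]
  exact (cyclotomic_eq_minpoly (zeta_spec 3 ℚ _) (by norm_num)).symm

def eisEquiv : Eis ≃ₐ[ℤ] 𝓞 (CyclotomicField 3 ℚ) :=
  AdjoinRoot.equiv' _ (zeta_spec 3 ℚ _).integralPowerBasis
    (by rw [IsPrimitiveRoot.integralPowerBasis_gen, minpoly_zeta_three_toInteger,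
      AdjoinRoot.aeval_eq, AdjoinRoot.mk_self])
    (by rw [IsPrimitiveRoot.integralPowerBasis_gen, ← minpoly_zeta_three_toInteger]
        exact minpoly.aeval _ _)

lemma eisEquiv_ρ : eisEquiv ρ = (zeta_spec 3 ℚ _).toInteger := by
  simp [eisEquiv, ρ]

instance : IsDomain Eis := eisEquiv.toMulEquiv.isDomain

instance : IsPrincipalIdealRing Eis :=
  have := Rat.three_pid (CyclotomicField 3 ℚ)
  IsPrincipalIdealRing.of_surjective eisEquiv.symm.toRingHom eisEquiv.symm.surjective

lemma isPrimitiveRoot_ρ : IsPrimitiveRoot ρ 3 := by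
  have h := (zeta_spec 3 ℚ (CyclotomicField 3 ℚ)).toInteger_isPrimitiveRoot
  rw [← eisEquiv_ρ] at h
  exact h.of_map_of_injective eisEquiv.injective

def eisBasis : Module.Basis (Fin 2) ℤ Eis :=
  (AdjoinRoot.powerBasis' (by monicity! : (X ^ 2 + X + 1 : ℤ[X]).Monic)).basis.reindex
    (finCongr (by rw [AdjoinRoot.powerBasis'_dim]; compute_degree!))

lemma eisBasis_apply (j : Fin 2) : eisBasis j = ρ ^ (j : ℕ) := by
  simp [eisBasis, ρ]

lemma eisBasis_repr (a b : ℤ) :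
    eisBasis.repr (a + b * ρ) = Finsupp.single 0 a + Finsupp.single 1 b := by
  apply eisBasis.repr.symm.injective
  simp [eisBasis_apply, zsmul_eq_mul]

lemma exists_eq_add_mul_ρ (z : Eis) : ∃ a b : ℤ, z = a + b * ρ := by
  refine ⟨eisBasis.repr z 0, eisBasis.repr z 1, ?_⟩
  conv_lhs => rw [← eisBasis.sum_repr z]
  simp [Fin.sum_univ_two, eisBasis_apply, zsmul_eq_mul]

lemma norm_add_mul_ρ (a b : ℤ) :
    Algebra.norm ℤ (a + b * ρ : Eis) = a ^ 2 - a * b + b ^ 2 := by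
  have hρ : (a + b * ρ : Eis) * ρ = ((-b : ℤ) : Eis) + ((a - b : ℤ) : Eis) * ρ := by
    push_cast
    linear_combination (b : Eis) * ρ_rel
  rw [Algebra.norm_eq_matrix_det eisBasis, Matrix.det_fin_two]
  simp only [Algebra.leftMulMatrix_eq_repr_mul, eisBasis_apply, Fin.val_zero, Fin.val_one,
    pow_zero, pow_one, mul_one, hρ, eisBasis_repr, Finsupp.add_apply, Finsupp.single_apply]
  norm_num
  ring

lemma eisNorm_add_mul_ρ (a b : ℤ) : (eisNorm (a + b * ρ) : ℤ) = a ^ 2 - a * b + b ^ 2 := by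
  rw [eisNorm, norm_add_mul_ρ, Int.natCast_natAbs, abs_of_nonneg]
  nlinarith [sq_nonneg (a - b), sq_nonneg a, sq_nonneg b]

lemma eisNorm_mul (z w : Eis) : eisNorm (z * w) = eisNorm z * eisNorm w := by
  rw [eisNorm, map_mul, Int.natAbs_mul, eisNorm, eisNorm]

lemma eisNorm_natCast (n : ℕ) : eisNorm n = n ^ 2 := by
  have h := eisNorm_add_mul_ρ n 0
  simp only [Int.cast_natCast, Int.cast_zero, zero_mul, add_zero, mul_zero, sub_zero] at h
  exact_mod_cast h

instance : CharZero Eis where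
  cast_injective m n h :=
    Nat.pow_left_injective two_ne_zero (by simpa only [eisNorm_natCast] using congrArg eisNorm h)

lemma eisNorm_eq_one_of_isUnit {z : Eis} (hz : IsUnit z) : eisNorm z = 1 :=
  Int.isUnit_iff_natAbs_eq.mp (hz.map (Algebra.norm ℤ))

lemma one_sub_ρ_dvd_three : (1 - ρ) ∣ (3 : Eis) :=
  ⟨-(1 - ρ) * ρ ^ 2, by linear_combination (ρ ^ 2 - 3 * ρ + 3) * ρ_rel⟩

lemma not_isUnit_one_sub_ρ : ¬ IsUnit (1 - ρ) := by
  intro h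
  have h1 := eisNorm_add_mul_ρ 1 (-1)
  rw [Int.cast_one, Int.cast_neg, Int.cast_one, neg_one_mul, ← sub_eq_add_neg,
    eisNorm_eq_one_of_isUnit h] at h1
  norm_num at h1

lemma eisNorm_mod_three_of_isCoprime {z : Eis} (hz : IsCoprime z 3) : eisNorm z % 3 = 1 := by
  obtain ⟨a, b, rfl⟩ := exists_eq_add_mul_ρ z
  have h3 : ¬ (3 : ℤ) ∣ a + b := by
    rintro ⟨k, hk⟩
    have hk' : ((a + b : ℤ) : Eis) = ((3 * k : ℤ) : Eis) := congrArg _ hk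
    push_cast at hk'
    have hdvd : (1 - ρ) ∣ (a + b * ρ : Eis) := by
      rw [show (a + b * ρ : Eis) = 3 * k - b * (1 - ρ) by linear_combination hk']
      exact dvd_sub (one_sub_ρ_dvd_three.mul_right _) (dvd_mul_left _ _)
    exact not_isUnit_one_sub_ρ (hz.isUnit_of_dvd' hdvd one_sub_ρ_dvd_three)
  have h := eisNorm_add_mul_ρ a b
  have hsq : (a + b) ^ 2 % 3 = 1 := by
    rcases (by omega : (a + b) % 3 = 1 ∨ (a + b) % 3 = 2) with h | h <;>
      simp [pow_two, Int.mul_emod, h]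
  have hexp : (a + b) ^ 2 = a ^ 2 - a * b + b ^ 2 + 3 * (a * b) := by ring
  omega

def CubicEulerCriterion (J : Eis → Eis → Eis) : Prop :=
  ∀ π a : Eis, Prime π → ¬ π ∣ (3 : Eis) → ¬ π ∣ a →
    (J a π) ^ 3 = 1 ∧ π ∣ a ^ ((eisNorm π - 1) / 3) - J a π

lemma symbol_ρ_of_prime {J : Eis → Eis → Eis} (hJchar : CubicEulerCriterion J) {π : Eis}
    (hπ : Prime π) (h3 : ¬ π ∣ 3) : J ρ π = ρ ^ (eisNorm π / 3) := by
  have hρ : ¬ π ∣ ρ := fun h =>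
    hπ.not_isUnit (isUnit_of_dvd_unit h (isPrimitiveRoot_ρ.isUnit three_ne_zero))
  obtain ⟨hcube, hdvd⟩ := hJchar π ρ hπ h3 hρ
  have hmod := eisNorm_mod_three_of_isCoprime (hπ.coprime_iff_not_dvd.mpr h3)
  rw [show (eisNorm π - 1) / 3 = eisNorm π / 3 by omega] at hdvd
  refine (eq_of_dvd_sub_of_pow_three_eq_one h3 ?_ hcube hdvd).symm
  rw [← pow_mul, mul_comm, pow_mul, isPrimitiveRoot_ρ.pow_eq_one, one_pow]

lemma symbol_ρ_of_isUnit {J : Eis → Eis → Eis}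
    (hJbot : ∀ a b c : Eis, J a (b * c) = J a b * J a c) (hJchar : CubicEulerCriterion J)
    {v : Eis} (hv : IsUnit v) : J ρ v = 1 := by
  have h2 : ¬ IsUnit (2 : Eis) := fun h => by
    have h4 := eisNorm_natCast 2
    rw [Nat.cast_ofNat, eisNorm_eq_one_of_isUnit h] at h4
    norm_num at h4
  -- any prime not dividing `3` will do; a prime factor of `2` is one
  obtain ⟨p, hp, hp2⟩ := WfDvdMonoid.exists_irreducible_factor h2 two_ne_zero
  have hp3 : ¬ p ∣ 3 := fun h3 => by
    have h1 := dvd_sub h3 hp2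
    norm_num at h1
    exact hp.not_isUnit (isUnit_of_dvd_one h1)
  have hpv3 : ¬ p * v ∣ 3 := fun h => hp3 (dvd_of_mul_right_dvd h)
  have h := hJbot ρ p v
  rw [symbol_ρ_of_prime hJchar ((associated_mul_unit_right p v hv).prime hp.prime) hpv3,
    eisNorm_mul, eisNorm_eq_one_of_isUnit hv, mul_one, symbol_ρ_of_prime hJchar hp.prime hp3] at h
  exact (mul_eq_left₀ (pow_ne_zero _ (isPrimitiveRoot_ρ.ne_zero three_ne_zero))).mp h.symm

lemma symbol_ρ_eq_pow {J : Eis → Eis → Eis}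
    (hJbot : ∀ a b c : Eis, J a (b * c) = J a b * J a c) (hJchar : CubicEulerCriterion J)
    {z : Eis} (hz : z ≠ 0) (h3 : IsCoprime z 3) : J ρ z = ρ ^ (eisNorm z / 3) := by
  induction z using UniqueFactorizationMonoid.induction_on_prime with
  | h₁ => exact absurd rfl hz
  | h₂ v hv => rw [symbol_ρ_of_isUnit hJbot hJchar hv, eisNorm_eq_one_of_isUnit hv, pow_zero]
  | h₃ a p ha hp ih =>
    have hp3 : IsCoprime p 3 := h3.of_mul_left_left
    have ha3 : IsCoprime a 3 := h3.of_mul_left_right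
    rw [hJbot, ih ha ha3, symbol_ρ_of_prime hJchar hp (hp.coprime_iff_not_dvd.mp hp3),
      eisNorm_mul, pow_mul_div_three isPrimitiveRoot_ρ.pow_eq_one
        (eisNorm_mod_three_of_isCoprime hp3) (eisNorm_mod_three_of_isCoprime ha3)]

theorem cubic_symbol_rho_eq_one_iff_general (J : Eis → Eis → Eis)
    (hJbot : ∀ a b c : Eis, J a (b * c) = J a b * J a c)
    (hJchar : ∀ π a : Eis, Prime π → ¬ π ∣ (3 : Eis) → ¬ π ∣ a →
      (J a π) ^ 3 = 1 ∧ π ∣ a ^ ((eisNorm π - 1) / 3) - J a π)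
    (u : ℕ) (hu3 : Nat.Coprime u 3) :
    J ρ ((u : ℕ) : Eis) = 1 ↔ (u % 9 = 1 ∨ u % 9 = 8) := by
  have hu : (u : Eis) ≠ 0 := Nat.cast_ne_zero.mpr (by rintro rfl; norm_num at hu3)
  have hu3' : IsCoprime (u : Eis) 3 := by
    simpa using (Nat.isCoprime_iff_coprime.mpr hu3).map (Int.castRingHom Eis)
  rw [symbol_ρ_eq_pow hJbot hJchar hu hu3', eisNorm_natCast,
    isPrimitiveRoot_ρ.pow_eq_one_iff_dvd, three_dvd_sq_div_three_iff hu3]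

/-- first supplementary law of cubic reciprocity: for a positive
integer `u` coprime to `3`, the cubic residue symbol `(ρ/u)₃` equals `1` if and
only if `u ≡ ±1 mod 9`. Here `J a b` denotes the cubic residue symbol `(a/b)₃`,
axiomatized by multiplicativity in both arguments and the prime characterization. -/
theorem cubic_symbol_rho_eq_one_iff (J : Eis → Eis → Eis)
    (hJbot : ∀ a b c : Eis, J a (b * c) = J a b * J a c)
    (hJtop : ∀ a b c : Eis, J (a * b) c = J a c * J b c)
    (hJchar : ∀ π a : Eis, Prime π → ¬ π ∣ (3 : Eis) → ¬ π ∣ a →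
      (J a π) ^ 3 = 1 ∧ π ∣ a ^ ((eisNorm π - 1) / 3) - J a π)
    (u : ℕ) (hu : 0 < u) (hu3 : Nat.Coprime u 3) :
    J ρ ((u : ℕ) : Eis) = 1 ↔ (u % 9 = 1 ∨ u % 9 = 8) :=
  cubic_symbol_rho_eq_one_iff_general J hJbot hJchar u hu3

end
end

section
/- Let (u_1, u_2, u_3) be pairwise coprime cubefree positive integers, let p be a prime with p ≠ 3 and p ∤ u_1 u_2 u_3. Then the equation u_1 X³ + u_2 Y³ + u_3 Z³ = 0 has a nontrivial solution over the p-adic numbers Q_p. -/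
/-!
Modulo `p` the form `u₁X³ + u₂Y³ + u₃Z³` has a nontrivial zero, as every diagonal ternary cubic
over a finite field `F` does. Dividing by the first coefficient, either two coefficients lie in
the same cube class, which gives a zero with a vanishing coordinate, or `1, a, b` represent the
three cube classes of `F^×`. In the latter case the cyclotomic numbers
`N(r, s) = #{x ∈ rF^×³ | 1 + x ∈ sF^×³}` satisfy `N(r, s) = N(s, r)` and `N(a, a) = N(1, b)`,
and sorting `x ∈ F^×³` and `x ∈ aF^×³` by the class of `1 + x` gives
`N(a, b) = N(1, 1) + 1 > 0`, i.e. a solution of `1 + a y³ + b z³ = 0`. Since `p ≠ 3` and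
`p ∤ u₁u₂u₃`, the cube roots needed to adjust a nonzero coordinate are simple roots mod `p`,
so Hensel's lemma lifts the zero to `ℤ_p`.
-/

open Finset Polynomial IsLocalRing

section CubeClass

variable {F : Type*} [Field F] [Fintype F] [DecidableEq F]

/-- The coset `c F^×³`, as a finset; `cubeClass 0 = {0}`. -/
def cubeClass (c : F) : Finset F := (univ.erase 0).image fun t => c * t ^ 3

theorem mem_cubeClass {c x : F} : x ∈ cubeClass c ↔ ∃ t ≠ 0, c * t ^ 3 = x := by
  simp [cubeClass]

theorem mem_cubeClass_zero {x : F} : x ∈ cubeClass 0 ↔ x = 0 := by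
  simp only [mem_cubeClass, zero_mul]
  exact ⟨fun ⟨_, _, h⟩ => h.symm, fun h => ⟨1, one_ne_zero, h.symm⟩⟩

theorem ne_zero_of_mem_cubeClass {c x : F} (hc : c ≠ 0) (h : x ∈ cubeClass c) : x ≠ 0 := by
  obtain ⟨t, ht, rfl⟩ := mem_cubeClass.1 h
  exact mul_ne_zero hc (pow_ne_zero 3 ht)

theorem cubeClass_eq_of_mem {c x : F} (h : x ∈ cubeClass c) : cubeClass x = cubeClass c := by
  obtain ⟨t, ht, rfl⟩ := mem_cubeClass.1 h
  ext y
  simp only [mem_cubeClass]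
  constructor
  · rintro ⟨s, hs, rfl⟩
    exact ⟨t * s, mul_ne_zero ht hs, by ring⟩
  · rintro ⟨s, hs, rfl⟩
    exact ⟨s / t, div_ne_zero hs ht, by field_simp⟩

theorem mem_cubeClass_iff_eq {c x : F} : x ∈ cubeClass c ↔ cubeClass x = cubeClass c :=
  ⟨cubeClass_eq_of_mem, fun h => h ▸ mem_cubeClass.2 ⟨1, one_ne_zero, by simp⟩⟩

theorem cubeClass_neg (c : F) : cubeClass (-c) = cubeClass c :=
  cubeClass_eq_of_mem (mem_cubeClass.2 ⟨-1, by simp, by ring⟩)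

theorem cubeClass_mul_congr {x x' y y' : F} (hx : cubeClass x = cubeClass x')
    (hy : cubeClass y = cubeClass y') : cubeClass (x * y) = cubeClass (x' * y') := by
  obtain ⟨t, ht, rfl⟩ := mem_cubeClass.1 (mem_cubeClass_iff_eq.2 hx)
  obtain ⟨s, hs, rfl⟩ := mem_cubeClass.1 (mem_cubeClass_iff_eq.2 hy)
  exact cubeClass_eq_of_mem (mem_cubeClass.2 ⟨t * s, mul_ne_zero ht hs, by ring⟩)

theorem cubeClass_inv_congr {x y : F} (h : cubeClass x = cubeClass y) :
    cubeClass x⁻¹ = cubeClass y⁻¹ := by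
  obtain ⟨t, ht, rfl⟩ := mem_cubeClass.1 (mem_cubeClass_iff_eq.2 h)
  exact cubeClass_eq_of_mem (mem_cubeClass.2 ⟨t⁻¹, inv_ne_zero ht, by rw [mul_inv, inv_pow]⟩)

theorem disjoint_cubeClass {c d : F} (h : cubeClass c ≠ cubeClass d) :
    Disjoint (cubeClass c) (cubeClass d) :=
  disjoint_left.2 fun _ hc hd => h ((cubeClass_eq_of_mem hc).symm.trans (cubeClass_eq_of_mem hd))

theorem card_cubeClass {c : F} (hc : c ≠ 0) : #(cubeClass c) = #(cubeClass (1 : F)) := by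
  have : cubeClass c = (cubeClass 1).image (c * ·) := by
    simp only [cubeClass, image_image, Function.comp_def, one_mul]
  rw [this, card_image_of_injective _ (mul_right_injective₀ hc)]

theorem card_sub_one_le_three_mul_card_cubeClass_one :
    Fintype.card F - 1 ≤ 3 * #(cubeClass (1 : F)) := by
  rw [← card_univ, ← card_erase_of_mem (mem_univ 0)]
  refine card_le_mul_card_image _ 3 fun y _ => ?_
  calc #{t ∈ univ.erase 0 | 1 * t ^ 3 = y} ≤ #(nthRootsFinset 3 y) :=
        card_le_card fun t ht => by simpa using (mem_filter.1 ht).2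
    _ ≤ Multiset.card (nthRoots 3 y) := by
        exact (nthRootsFinset_def 3 y).symm ▸ Multiset.toFinset_card_le _
    _ ≤ 3 := card_nthRoots 3 y


theorem cubeClass_eq_one_or_eq_or_eq {a b : F} (ha : a ≠ 0) (hb : b ≠ 0)
    (h1a : cubeClass 1 ≠ cubeClass a) (h1b : cubeClass 1 ≠ cubeClass b)
    (hab : cubeClass a ≠ cubeClass b) {y : F} (hy : y ≠ 0) :
    cubeClass y = cubeClass 1 ∨ cubeClass y = cubeClass a ∨ cubeClass y = cubeClass b := by
  have hsub : cubeClass 1 ∪ cubeClass a ∪ cubeClass b ⊆ univ.erase 0 := by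
    intro u hu
    refine mem_erase.2 ⟨?_, mem_univ u⟩
    rcases mem_union.1 hu with hu | hu
    · rcases mem_union.1 hu with hu | hu
      exacts [ne_zero_of_mem_cubeClass one_ne_zero hu, ne_zero_of_mem_cubeClass ha hu]
    · exact ne_zero_of_mem_cubeClass hb hu
  have hcard : #(univ.erase (0 : F)) ≤ #(cubeClass 1 ∪ cubeClass a ∪ cubeClass b) := by
    rw [card_union_of_disjoint (disjoint_union_left.2
        ⟨disjoint_cubeClass h1b, disjoint_cubeClass hab⟩),
      card_union_of_disjoint (disjoint_cubeClass h1a), card_cubeClass ha, card_cubeClass hb,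
      card_erase_of_mem (mem_univ 0), card_univ]
    linarith [card_sub_one_le_three_mul_card_cubeClass_one (F := F)]
  have hy' : y ∈ cubeClass 1 ∪ cubeClass a ∪ cubeClass b :=
    eq_of_subset_of_card_le hsub hcard ▸ mem_erase.2 ⟨hy, mem_univ y⟩
  simpa only [mem_union, mem_cubeClass_iff_eq, or_assoc] using hy'

theorem neg_mem_cubeClass_iff {c x : F} : -x ∈ cubeClass c ↔ x ∈ cubeClass c := by
  rw [mem_cubeClass_iff_eq, mem_cubeClass_iff_eq, cubeClass_neg]

def cyclotomicNumber (r s : F) : ℕ := #{x ∈ cubeClass r | 1 + x ∈ cubeClass s}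

theorem cyclotomicNumber_comm (r s : F) : cyclotomicNumber r s = cyclotomicNumber s r := by
  have maps_to : ∀ r s : F, ∀ x ∈ {x ∈ cubeClass r | 1 + x ∈ cubeClass s},
      -(1 + x) ∈ {x ∈ cubeClass s | 1 + x ∈ cubeClass r} := by
    intro r s x hx
    rw [mem_filter] at hx ⊢
    rw [show 1 + -(1 + x) = -x by ring, neg_mem_cubeClass_iff, neg_mem_cubeClass_iff]
    exact hx.symm
  exact card_nbij' (fun x => -(1 + x)) (fun x => -(1 + x)) (maps_to r s) (maps_to s r)
    (fun x _ => by ring) (fun x _ => by ring)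

theorem cyclotomicNumber_inv {r : F} (hr : r ≠ 0) (s : F) :
    cyclotomicNumber r s = cyclotomicNumber r⁻¹ (s * r⁻¹) := by
  have maps_to : ∀ r s : F, r ≠ 0 → ∀ x ∈ {x ∈ cubeClass r | 1 + x ∈ cubeClass s},
      x⁻¹ ∈ {x ∈ cubeClass r⁻¹ | 1 + x ∈ cubeClass (s * r⁻¹)} := by
    intro r s hr x hx
    rw [mem_filter] at hx ⊢
    have hx0 := ne_zero_of_mem_cubeClass hr hx.1
    simp only [mem_cubeClass_iff_eq] at hx ⊢
    have hinv := cubeClass_inv_congr hx.1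
    rw [show 1 + x⁻¹ = (1 + x) * x⁻¹ by rw [add_mul, one_mul, mul_inv_cancel₀ hx0, add_comm]]
    exact ⟨hinv, cubeClass_mul_congr hx.2 hinv⟩
  refine card_nbij' (fun x => x⁻¹) (fun x => x⁻¹) (maps_to r s hr) (fun x hx => ?_)
    (fun x _ => inv_inv x) (fun x _ => inv_inv x)
  simpa [hr] using maps_to r⁻¹ (s * r⁻¹) (inv_ne_zero hr) x hx

theorem cyclotomicNumber_zero_right (r : F) :
    cyclotomicNumber r 0 = if cubeClass r = cubeClass 1 then 1 else 0 := by
  have : {x ∈ cubeClass r | 1 + x ∈ cubeClass 0} = {x ∈ cubeClass r | x = -1} := by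
    simp only [mem_cubeClass_zero, add_eq_zero_iff_eq_neg']
  rw [cyclotomicNumber, this, filter_eq']
  by_cases h : cubeClass r = cubeClass 1
  · simp [h, mem_cubeClass_iff_eq, cubeClass_neg]
  · simp [h, mem_cubeClass_iff_eq, cubeClass_neg, Ne.symm h]

theorem card_cubeClass_eq_sum_cyclotomicNumber {a b : F} (ha : a ≠ 0) (hb : b ≠ 0)
    (h1a : cubeClass 1 ≠ cubeClass a) (h1b : cubeClass 1 ≠ cubeClass b)
    (hab : cubeClass a ≠ cubeClass b) (r : F) :
    #(cubeClass r) = cyclotomicNumber r 0 + cyclotomicNumber r 1 + cyclotomicNumber r a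
      + cyclotomicNumber r b := by
  have h0 : ∀ {c : F}, c ≠ 0 → cubeClass c ≠ cubeClass 0 := fun hc h =>
    ne_zero_of_mem_cubeClass hc (mem_cubeClass_iff_eq.2 h.symm) rfl
  have hsplit : ∀ y : F, 1 = (if y ∈ cubeClass 0 then 1 else 0)
      + (if y ∈ cubeClass 1 then 1 else 0) + (if y ∈ cubeClass a then 1 else 0)
      + (if y ∈ cubeClass b then 1 else 0) := by
    intro y
    simp only [mem_cubeClass_iff_eq]
    rcases eq_or_ne y 0 with rfl | hy
    · simp [(h0 one_ne_zero).symm, (h0 ha).symm, (h0 hb).symm]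
    rcases cubeClass_eq_one_or_eq_or_eq ha hb h1a h1b hab hy with h | h | h <;>
      simp [h, h0 one_ne_zero, h0 ha, h0 hb, h1a, h1b, hab, h1a.symm, h1b.symm, hab.symm]
  simp only [cyclotomicNumber, card_filter]
  rw [← sum_add_distrib, ← sum_add_distrib, ← sum_add_distrib, card_eq_sum_ones]
  exact sum_congr rfl fun x _ => hsplit (1 + x)

theorem exists_one_add_mul_cube_add_mul_cube_eq_zero {a b : F} (ha : a ≠ 0) (hb : b ≠ 0)
    (h1a : cubeClass 1 ≠ cubeClass a) (h1b : cubeClass 1 ≠ cubeClass b)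
    (hab : cubeClass a ≠ cubeClass b) : ∃ y z : F, 1 + a * y ^ 3 + b * z ^ 3 = 0 := by
  -- `ab` is a cube: otherwise dividing by `a` or by `b` would make `b` or `a` one.
  have hinv : cubeClass a⁻¹ = cubeClass b := by
    rcases cubeClass_eq_one_or_eq_or_eq ha hb h1a h1b hab (mul_ne_zero ha hb) with h | h | h
    · simpa [ha] using cubeClass_mul_congr (rfl : cubeClass a⁻¹ = _) h.symm
    · refine absurd ?_ h1b.symm
      simpa [ha] using cubeClass_mul_congr (rfl : cubeClass a⁻¹ = _) h
    · refine absurd ?_ h1a.symm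
      simpa [hb] using cubeClass_mul_congr h (rfl : cubeClass b⁻¹ = _)
  have row_one := card_cubeClass_eq_sum_cyclotomicNumber ha hb h1a h1b hab 1
  have row_a := card_cubeClass_eq_sum_cyclotomicNumber ha hb h1a h1b hab a
  have haa : cyclotomicNumber a a = cyclotomicNumber 1 b := by
    rw [cyclotomicNumber_inv ha, mul_inv_cancel₀ ha, cyclotomicNumber, hinv,
      ← cyclotomicNumber, cyclotomicNumber_comm]
  rw [card_cubeClass ha, cyclotomicNumber_comm a 1, haa] at row_a
  simp only [cyclotomicNumber_zero_right, ↓reduceIte, if_neg (Ne.symm h1a)] at row_one row_a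
  obtain ⟨x, hx⟩ : (({x ∈ cubeClass a | 1 + x ∈ cubeClass b}) : Finset F).Nonempty := by
    rw [← card_pos, ← cyclotomicNumber]
    omega
  obtain ⟨⟨y, -, rfl⟩, ⟨z, -, hz⟩⟩ := (mem_filter.1 hx).imp mem_cubeClass.1 mem_cubeClass.1
  exact ⟨y, -z, by linear_combination -hz⟩

theorem exists_ne_zero_diagonal_cubic_eq_zero (a b c : F) :
    ∃ x y z : F, (x, y, z) ≠ (0, 0, 0) ∧ a * x ^ 3 + b * y ^ 3 + c * z ^ 3 = 0 := by
  rcases eq_or_ne a 0 with rfl | ha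
  · exact ⟨1, 0, 0, by simp, by ring⟩
  obtain ⟨d, rfl⟩ : ∃ d, b = a * d := ⟨b / a, (mul_div_cancel₀ b ha).symm⟩
  obtain ⟨e, rfl⟩ : ∃ e, c = a * e := ⟨c / a, (mul_div_cancel₀ c ha).symm⟩
  rcases eq_or_ne d 0 with rfl | hd
  · exact ⟨0, 1, 0, by simp, by ring⟩
  rcases eq_or_ne e 0 with rfl | he
  · exact ⟨0, 0, 1, by simp, by ring⟩
  by_cases h1d : cubeClass 1 = cubeClass d
  · obtain ⟨t, -, ht⟩ := mem_cubeClass.1 (mem_cubeClass_iff_eq.2 h1d.symm)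
    exact ⟨-t, 1, 0, by simp, by linear_combination -a * ht⟩
  by_cases h1e : cubeClass 1 = cubeClass e
  · obtain ⟨t, -, ht⟩ := mem_cubeClass.1 (mem_cubeClass_iff_eq.2 h1e.symm)
    exact ⟨-t, 0, 1, by simp, by linear_combination -a * ht⟩
  by_cases hde : cubeClass d = cubeClass e
  · obtain ⟨t, -, ht⟩ := mem_cubeClass.1 (mem_cubeClass_iff_eq.2 hde)
    exact ⟨0, 1, -t, by simp, by linear_combination -a * ht⟩
  obtain ⟨y, z, h⟩ := exists_one_add_mul_cube_add_mul_cube_eq_zero hd he h1d h1e hde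
  exact ⟨1, y, z, by simp, by linear_combination a * h⟩

end CubeClass

section Henselian

universe u

variable {R K : Type u} [CommRing R] [HenselianLocalRing R] [Field K] {φ : R →+* K}

theorem HenselianLocalRing.exists_pow_eq_of_map_eq (hφ : Function.Surjective φ) {n : ℕ}
    (hn : (n : K) ≠ 0) {w : R} {z : K} (hz : z ≠ 0) (hw : φ w = z ^ n) :
    ∃ Z, Z ^ n = w ∧ φ Z = z := by
  have hn0 : n ≠ 0 := by rintro rfl; simp at hn
  have lift_simple_root := ((HenselianLocalRing.TFAE R).out 0 2).mp ‹_›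
  obtain ⟨Z, hZ, rfl⟩ := lift_simple_root φ hφ (X ^ n - C w) (monic_X_pow_sub_C w hn0) z
    (by simp [hw]) (by simp [derivative_X_pow, hn, hz])
  exact ⟨Z, by simpa [sub_eq_zero] using hZ, rfl⟩

theorem HenselianLocalRing.exists_diagonal_cubic_eq_zero_of_map (hφ : Function.Surjective φ)
    (h3 : (3 : K) ≠ 0) {a b c : R} (hc : φ c ≠ 0) {x y z : K} (hz : z ≠ 0)
    (h : φ a * x ^ 3 + φ b * y ^ 3 + φ c * z ^ 3 = 0) :
    ∃ X Y Z : R, Z ≠ 0 ∧ a * X ^ 3 + b * Y ^ 3 + c * Z ^ 3 = 0 := by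
  obtain ⟨X, rfl⟩ := hφ x
  obtain ⟨Y, rfl⟩ := hφ y
  obtain ⟨c, rfl⟩ : IsUnit c := by
    by_contra hcu
    rw [← mem_nonunits_iff, ← mem_maximalIdeal, ← ker_eq_maximalIdeal φ hφ,
      RingHom.mem_ker] at hcu
    exact hc hcu
  have hw : φ (-(a * X ^ 3 + b * Y ^ 3) * ↑c⁻¹) = z ^ 3 := by
    simp only [map_mul, map_units_inv, map_neg, map_add, map_pow]
    field_simp
    linear_combination -h
  obtain ⟨Z, hZ, rfl⟩ := exists_pow_eq_of_map_eq hφ (by exact_mod_cast h3) hz hw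
  refine ⟨X, Y, Z, fun h0 => hz (by rw [h0, map_zero]), ?_⟩
  linear_combination ↑c * hZ - (a * X ^ 3 + b * Y ^ 3) * c.mul_inv

theorem HenselianLocalRing.exists_ne_zero_diagonal_cubic_eq_zero_of_map
    (hφ : Function.Surjective φ) (h3 : (3 : K) ≠ 0) {a b c : R} (ha : φ a ≠ 0) (hb : φ b ≠ 0)
    (hc : φ c ≠ 0) {x y z : K} (hxyz : (x, y, z) ≠ (0, 0, 0))
    (h : φ a * x ^ 3 + φ b * y ^ 3 + φ c * z ^ 3 = 0) :
    ∃ X Y Z : R, (X, Y, Z) ≠ (0, 0, 0) ∧ a * X ^ 3 + b * Y ^ 3 + c * Z ^ 3 = 0 := by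
  by_cases hz : z ≠ 0
  · obtain ⟨X, Y, Z, hZ, e⟩ := exists_diagonal_cubic_eq_zero_of_map hφ h3 hc hz h
    exact ⟨X, Y, Z, by simp [hZ], e⟩
  by_cases hy : y ≠ 0
  · obtain ⟨X, Z, Y, hY, e⟩ :=
      exists_diagonal_cubic_eq_zero_of_map (a := a) (b := c) (x := x) (y := z) hφ h3 hb hy
        (by linear_combination h)
    exact ⟨X, Y, Z, by simp [hY], by linear_combination e⟩
  have hx : x ≠ 0 := by
    rintro rfl
    simp_all
  obtain ⟨Y, Z, X, hX, e⟩ :=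
    exists_diagonal_cubic_eq_zero_of_map (a := b) (b := c) (x := y) (y := z) hφ h3 ha hx
      (by linear_combination h)
  exact ⟨X, Y, Z, by simp [hX], by linear_combination e⟩

end Henselian

instance PadicInt.henselianLocalRing (p : ℕ) [Fact p.Prime] : HenselianLocalRing ℤ_[p] where
  is_henselian f hf a₀ h₁ h₂ := HenselianRing.is_henselian f hf a₀ h₁ (h₂.map _)

theorem local_solvable_good_prime_general (u₁ u₂ u₃ : ℕ)
    (p : ℕ) [Fact p.Prime] (hp3 : p ≠ 3) (hpu : ¬ p ∣ u₁ * u₂ * u₃) :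
    ∃ X Y Z : ℚ_[p], (X, Y, Z) ≠ (0, 0, 0) ∧
      (u₁ : ℚ_[p]) * X ^ 3 + (u₂ : ℚ_[p]) * Y ^ 3 + (u₃ : ℚ_[p]) * Z ^ 3 = 0 := by
  have hunit : ∀ u : ℕ, ¬ p ∣ u → PadicInt.toZMod (u : ℤ_[p]) ≠ 0 := fun u hu => by
    rwa [map_natCast, Ne, ZMod.natCast_eq_zero_iff]
  have h3 : (3 : ZMod p) ≠ 0 := by
    exact_mod_cast (ZMod.natCast_eq_zero_iff 3 p).not.2
      fun h => hp3 ((Nat.prime_dvd_prime_iff_eq Fact.out Nat.prime_three).1 h)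
  have h₁ := hunit u₁ fun h => hpu ((h.mul_right u₂).mul_right u₃)
  have h₂ := hunit u₂ fun h => hpu ((h.mul_left u₁).mul_right u₃)
  have h₃ := hunit u₃ fun h => hpu (h.mul_left _)
  obtain ⟨x, y, z, hxyz, h⟩ := exists_ne_zero_diagonal_cubic_eq_zero (u₁ : ZMod p) u₂ u₃
  obtain ⟨X, Y, Z, hXYZ, e⟩ := HenselianLocalRing.exists_ne_zero_diagonal_cubic_eq_zero_of_map
    (ZMod.ringHom_surjective PadicInt.toZMod) h3 h₁ h₂ h₃ hxyz (by simpa using h)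
  refine ⟨X, Y, Z, by simpa using hXYZ, by exact_mod_cast congrArg ((↑) : ℤ_[p] → ℚ_[p]) e⟩

/-- for pairwise coprime cubefree positive integers `u₁, u₂, u₃` and a
prime `p ≠ 3` not dividing `u₁u₂u₃`, the equation `u₁X³ + u₂Y³ + u₃Z³ = 0` has a
nontrivial solution in `ℚ_p`. -/
theorem local_solvable_good_prime (u₁ u₂ u₃ : ℕ)
    (h₁ : 0 < u₁) (h₂ : 0 < u₂) (h₃ : 0 < u₃)
    (hcf₁ : ∀ p : ℕ, p.Prime → ¬ p ^ 3 ∣ u₁)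
    (hcf₂ : ∀ p : ℕ, p.Prime → ¬ p ^ 3 ∣ u₂)
    (hcf₃ : ∀ p : ℕ, p.Prime → ¬ p ^ 3 ∣ u₃)
    (hco₁₂ : Nat.Coprime u₁ u₂) (hco₁₃ : Nat.Coprime u₁ u₃) (hco₂₃ : Nat.Coprime u₂ u₃)
    (p : ℕ) [Fact p.Prime] (hp3 : p ≠ 3) (hpu : ¬ p ∣ u₁ * u₂ * u₃) :
    ∃ X Y Z : ℚ_[p], (X, Y, Z) ≠ (0, 0, 0) ∧
      (u₁ : ℚ_[p]) * X ^ 3 + (u₂ : ℚ_[p]) * Y ^ 3 + (u₃ : ℚ_[p]) * Z ^ 3 = 0 :=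
  local_solvable_good_prime_general u₁ u₂ u₃ p hp3 hpu
end

section
/- Let (u_1, u_2, u_3) be pairwise coprime cubefree positive integers and let p ≠ 3 be a prime with p | u_1. Then the equation u_1 X³ + u_2 Y³ + u_3 Z³ = 0 has a nontrivial solution over Q_p if and only if the residue class of u_2/u_3 is a cube in F_p^×. -/
/-!
Since `u₁` is cubefree, `1 ≤ v_p(u₁) ≤ 2`, while `u₂` and `u₃` are `p`-adic units. Scale a
nontrivial solution to a primitive one in `ℤ_p³` and reduce mod `p`: this gives
`u₂ y³ + u₃ z³ ≡ 0`. If `y ≡ 0` then also `z ≡ 0`, so `p³ ∣ u₁ x³` with `x` a unit,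
contradicting `p³ ∤ u₁`; hence `y, z ≢ 0` and `u₂/u₃ ≡ (-z/y)³`. Conversely, for `p ≠ 3` a
solution of `u₂ y³ + u₃ z³ ≡ 0` with `y ≢ 0` is a simple root in `y`, which Hensel's lemma lifts
to a solution with `X = 0`.
-/

theorem exists_unit_pow_three_eq_mul_inv_iff {F : Type*} [Field F] {a b : F} (ha : a ≠ 0) :
    (∃ x : Fˣ, (x : F) ^ 3 = a * b⁻¹) ↔ ∃ y z : F, y ≠ 0 ∧ a * y ^ 3 + b * z ^ 3 = 0 := by
  constructor
  · rintro ⟨x, hx⟩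
    have hb : b ≠ 0 := by
      rintro rfl
      simp at hx
    refine ⟨-(x : F)⁻¹, 1, by simp, ?_⟩
    field_simp
    rw [hx]
    field_simp
    ring
  · rintro ⟨y, z, hy, h⟩
    have hz : z ≠ 0 := by
      rintro rfl
      simp_all
    have hb : b ≠ 0 := by
      rintro rfl
      simp_all
    refine ⟨Units.mk0 (-z / y) (by simp [hy, hz]), ?_⟩
    rw [Units.val_mk0]
    field_simp
    linear_combination -h

theorem exists_mul_norm_le_one_and_eq_one {K ι : Type*} [NormedField K] [Fintype ι]
    {v : ι → K} (hv : v ≠ 0) :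
    ∃ c : K, c ≠ 0 ∧ (∀ i, ‖c * v i‖ ≤ 1) ∧ ∃ i, ‖c * v i‖ = 1 := by
  obtain ⟨i₀, hi₀⟩ := Function.ne_iff.mp hv
  obtain ⟨j, -, hj⟩ := Finset.univ.exists_max_image (‖v ·‖) ⟨i₀, Finset.mem_univ _⟩
  have hvj : v j ≠ 0 := norm_pos_iff.mp <| (norm_pos_iff.mpr hi₀).trans_le (hj i₀ (by simp))
  refine ⟨(v j)⁻¹, inv_ne_zero hvj, fun i => ?_, j, by simp [hvj]⟩
  rw [norm_mul, norm_inv, inv_mul_le_iff₀ (norm_pos_iff.mpr hvj), mul_one]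
  exact hj i (Finset.mem_univ _)

namespace PadicInt

open Polynomial

variable {p : ℕ} [Fact p.Prime]

theorem toZMod_eq_zero_iff_dvd (x : ℤ_[p]) : toZMod x = 0 ↔ (p : ℤ_[p]) ∣ x := by
  rw [← RingHom.mem_ker, ker_toZMod, maximalIdeal_eq_span_p, Ideal.mem_span_singleton]

theorem toZMod_eq_zero_iff_not_isUnit (x : ℤ_[p]) : toZMod x = 0 ↔ ¬IsUnit x := by
  rw [← RingHom.mem_ker, ker_toZMod, IsLocalRing.mem_maximalIdeal, mem_nonunits_iff]

theorem pow_p_dvd_natCast_iff (n k : ℕ) : (p : ℤ_[p]) ^ n ∣ (k : ℤ_[p]) ↔ p ^ n ∣ k := by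
  exact_mod_cast pow_p_dvd_int_iff (p := p) n k

theorem exists_eval_eq_zero_of_toZMod {F : ℤ_[p][X]} {a : ℤ_[p]}
    (hF : toZMod (F.eval a) = 0) (hF' : toZMod (F.derivative.eval a) ≠ 0) :
    ∃ z : ℤ_[p], F.eval z = 0 ∧ toZMod z = toZMod a := by
  have hunit : ‖F.derivative.eval a‖ = 1 :=
    isUnit_iff.mp (not_not.mp <| (toZMod_eq_zero_iff_not_isUnit _).not.mp hF')
  have hlt : ‖F.eval a‖ < 1 := not_isUnit_iff.mp ((toZMod_eq_zero_iff_not_isUnit _).mp hF)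
  obtain ⟨z, hz, hza, -⟩ := hensels_lemma (F := F) (a := a)
    (by simpa only [coe_aeval_eq_eval, hunit, one_pow] using hlt)
  simp only [coe_aeval_eq_eval, hunit] at hz hza
  refine ⟨z, hz, ?_⟩
  rw [← sub_eq_zero, ← map_sub, toZMod_eq_zero_iff_dvd, ← norm_lt_one_iff_dvd]
  exact hza

theorem exists_mul_pow_add_eq_zero {n : ℕ} (hn : (n : ZMod p) ≠ 0) {a b y : ℤ_[p]}
    (ha : toZMod a ≠ 0) (hy : toZMod y ≠ 0) (h : toZMod (a * y ^ n + b) = 0) :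
    ∃ Y : ℤ_[p], a * Y ^ n + b = 0 ∧ toZMod Y = toZMod y := by
  have hF : ∀ x, (C a * X ^ n + C b).eval x = a * x ^ n + b := by simp
  obtain ⟨Y, hY, hYy⟩ := exists_eval_eq_zero_of_toZMod (F := C a * X ^ n + C b)
    (a := y) (by rwa [hF]) <| by
      simp only [derivative_add, derivative_C_mul_X_pow, derivative_C, add_zero, eval_mul,
        eval_C, eval_natCast, eval_pow, eval_X, map_mul, map_pow, map_natCast]
      exact mul_ne_zero (mul_ne_zero ha hn) (pow_ne_zero _ hy)
  exact ⟨Y, by rwa [hF] at hY, hYy⟩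

variable {a₁ a₂ a₃ : ℤ_[p]}

theorem exists_primitive_cubic_zero {X Y Z : ℚ_[p]} (hXYZ : (X, Y, Z) ≠ (0, 0, 0))
    (h : (a₁ : ℚ_[p]) * X ^ 3 + (a₂ : ℚ_[p]) * Y ^ 3 + (a₃ : ℚ_[p]) * Z ^ 3 = 0) :
    ∃ x y z : ℤ_[p], (IsUnit x ∨ IsUnit y ∨ IsUnit z) ∧
      a₁ * x ^ 3 + a₂ * y ^ 3 + a₃ * z ^ 3 = 0 := by
  have hv : ![X, Y, Z] ≠ 0 := fun h0 => hXYZ <| by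
    simpa using And.intro (congrFun h0 0) (And.intro (congrFun h0 1) (congrFun h0 2))
  obtain ⟨c, -, hle, hone⟩ := exists_mul_norm_le_one_and_eq_one hv
  simp only [Fin.forall_fin_succ, Fin.exists_fin_succ, Fin.isValue, Matrix.cons_val_zero,
    Matrix.cons_val_succ, Matrix.cons_val_fin_one, forall_const, exists_const] at hle hone
  obtain ⟨hX, hY, hZ⟩ := hle
  obtain ⟨x, hx⟩ : ∃ x : ℤ_[p], (x : ℚ_[p]) = c * X := ⟨⟨c * X, hX⟩, rfl⟩
  obtain ⟨y, hy⟩ : ∃ y : ℤ_[p], (y : ℚ_[p]) = c * Y := ⟨⟨c * Y, hY⟩, rfl⟩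
  obtain ⟨z, hz⟩ : ∃ z : ℤ_[p], (z : ℚ_[p]) = c * Z := ⟨⟨c * Z, hZ⟩, rfl⟩
  refine ⟨x, y, z, ?_, ext ?_⟩
  · simpa only [isUnit_iff, norm_def, hx, hy, hz] using hone
  · push_cast
    rw [hx, hy, hz]
    linear_combination c ^ 3 * h

theorem toZMod_ne_zero_of_primitive_cubic_zero (ha₁ : toZMod a₁ = 0)
    (ha₁' : ¬(p : ℤ_[p]) ^ 3 ∣ a₁) (ha₃ : toZMod a₃ ≠ 0) {x y z : ℤ_[p]}
    (hprim : IsUnit x ∨ IsUnit y ∨ IsUnit z) (h : a₁ * x ^ 3 + a₂ * y ^ 3 + a₃ * z ^ 3 = 0) :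
    toZMod y ≠ 0 := by
  intro hy
  have hz : toZMod z = 0 := by
    have := congrArg toZMod h
    simp only [map_add, map_mul, map_pow, ha₁, hy, map_zero] at this
    simpa [ha₃] using this
  have hx : IsUnit x := by
    rw [toZMod_eq_zero_iff_not_isUnit] at hy hz
    tauto
  rw [toZMod_eq_zero_iff_dvd] at hy hz
  refine ha₁' ((hx.pow 3).dvd_mul_right.mp ?_)
  rw [show a₁ * x ^ 3 = -(a₂ * y ^ 3 + a₃ * z ^ 3) by linear_combination h]
  exact (dvd_add (dvd_mul_of_dvd_right (pow_dvd_pow_of_dvd hy 3) _)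
    (dvd_mul_of_dvd_right (pow_dvd_pow_of_dvd hz 3) _)).neg_right

theorem exists_zmod_cubic_zero_of_padic (ha₁ : toZMod a₁ = 0) (ha₁' : ¬(p : ℤ_[p]) ^ 3 ∣ a₁)
    (ha₃ : toZMod a₃ ≠ 0) {X Y Z : ℚ_[p]} (hXYZ : (X, Y, Z) ≠ (0, 0, 0))
    (h : (a₁ : ℚ_[p]) * X ^ 3 + (a₂ : ℚ_[p]) * Y ^ 3 + (a₃ : ℚ_[p]) * Z ^ 3 = 0) :
    ∃ y z : ZMod p, y ≠ 0 ∧ toZMod a₂ * y ^ 3 + toZMod a₃ * z ^ 3 = 0 := by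
  obtain ⟨x, y, z, hprim, h⟩ := exists_primitive_cubic_zero hXYZ h
  refine ⟨toZMod y, toZMod z, toZMod_ne_zero_of_primitive_cubic_zero ha₁ ha₁' ha₃ hprim h, ?_⟩
  simpa [ha₁] using congrArg toZMod h

theorem exists_padic_cubic_zero_of_zmod (hp : p ≠ 3) (ha₂ : toZMod a₂ ≠ 0) {y z : ZMod p}
    (hy : y ≠ 0) (h : toZMod a₂ * y ^ 3 + toZMod a₃ * z ^ 3 = 0) :
    ∃ X Y Z : ℚ_[p], (X, Y, Z) ≠ (0, 0, 0) ∧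
      (a₁ : ℚ_[p]) * X ^ 3 + (a₂ : ℚ_[p]) * Y ^ 3 + (a₃ : ℚ_[p]) * Z ^ 3 = 0 := by
  have h3 : ((3 : ℕ) : ZMod p) ≠ 0 := by
    rw [Ne, ZMod.natCast_eq_zero_iff]
    exact fun hdvd => hp ((Nat.prime_dvd_prime_iff_eq Fact.out Nat.prime_three).mp hdvd)
  obtain ⟨y, rfl⟩ := ZMod.ringHom_surjective toZMod y
  obtain ⟨z, rfl⟩ := ZMod.ringHom_surjective toZMod z
  obtain ⟨Y, hY, hYy⟩ := exists_mul_pow_add_eq_zero h3 ha₂ hy (b := a₃ * z ^ 3) (by simpa using h)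
  have hY0 : (Y : ℚ_[p]) ≠ 0 := coe_ne_zero.mpr <| by
    rintro rfl
    exact hy (by rw [← hYy, map_zero])
  refine ⟨0, Y, z, by simp [hY0], ?_⟩
  simpa using congrArg ((↑) : ℤ_[p] → ℚ_[p]) hY

end PadicInt

theorem local_solvable_bad_prime_general (u₁ u₂ u₃ : ℕ)
    (hcf₁ : ∀ p : ℕ, p.Prime → ¬ p ^ 3 ∣ u₁)
    (hco₁₂ : Nat.Coprime u₁ u₂) (hco₁₃ : Nat.Coprime u₁ u₃)
    (p : ℕ) [Fact p.Prime] (hp3 : p ≠ 3) (hpu : p ∣ u₁) :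
    (∃ X Y Z : ℚ_[p], (X, Y, Z) ≠ (0, 0, 0) ∧
      (u₁ : ℚ_[p]) * X ^ 3 + (u₂ : ℚ_[p]) * Y ^ 3 + (u₃ : ℚ_[p]) * Z ^ 3 = 0) ↔
    (∃ x : (ZMod p)ˣ, (x : ZMod p) ^ 3 = (u₂ : ZMod p) * (u₃ : ZMod p)⁻¹) := by
  have hp : p.Prime := Fact.out
  have hu₁ : PadicInt.toZMod (u₁ : ℤ_[p]) = 0 := by
    rwa [map_natCast, ZMod.natCast_eq_zero_iff]
  have hu₂ : PadicInt.toZMod (u₂ : ℤ_[p]) ≠ 0 := by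
    rw [map_natCast, Ne, ZMod.natCast_eq_zero_iff]
    exact fun h => hp.ne_one (Nat.eq_one_of_dvd_coprimes hco₁₂ hpu h)
  have hu₃ : PadicInt.toZMod (u₃ : ℤ_[p]) ≠ 0 := by
    rw [map_natCast, Ne, ZMod.natCast_eq_zero_iff]
    exact fun h => hp.ne_one (Nat.eq_one_of_dvd_coprimes hco₁₃ hpu h)
  have hu₁' : ¬(p : ℤ_[p]) ^ 3 ∣ u₁ := by
    rw [PadicInt.pow_p_dvd_natCast_iff]
    exact hcf₁ p hp
  rw [exists_unit_pow_three_eq_mul_inv_iff (by rwa [map_natCast] at hu₂)]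
  simp only [← PadicInt.coe_natCast, ← map_natCast PadicInt.toZMod]
  exact ⟨fun ⟨X, Y, Z, hXYZ, h⟩ => PadicInt.exists_zmod_cubic_zero_of_padic hu₁ hu₁' hu₃ hXYZ h,
    fun ⟨y, z, hy, h⟩ => PadicInt.exists_padic_cubic_zero_of_zmod hp3 hu₂ hy h⟩

/-- for pairwise coprime cubefree positive integers `u₁, u₂, u₃` and a
prime `p ≠ 3` dividing `u₁`, the equation `u₁X³ + u₂Y³ + u₃Z³ = 0` has a nontrivial
solution in `ℚ_p` iff `u₂/u₃` is a cube in `F_p^×`. -/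
theorem local_solvable_bad_prime (u₁ u₂ u₃ : ℕ)
    (h₁ : 0 < u₁) (h₂ : 0 < u₂) (h₃ : 0 < u₃)
    (hcf₁ : ∀ p : ℕ, p.Prime → ¬ p ^ 3 ∣ u₁)
    (hcf₂ : ∀ p : ℕ, p.Prime → ¬ p ^ 3 ∣ u₂)
    (hcf₃ : ∀ p : ℕ, p.Prime → ¬ p ^ 3 ∣ u₃)
    (hco₁₂ : Nat.Coprime u₁ u₂) (hco₁₃ : Nat.Coprime u₁ u₃) (hco₂₃ : Nat.Coprime u₂ u₃)
    (p : ℕ) [Fact p.Prime] (hp3 : p ≠ 3) (hpu : p ∣ u₁) :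
    (∃ X Y Z : ℚ_[p], (X, Y, Z) ≠ (0, 0, 0) ∧
      (u₁ : ℚ_[p]) * X ^ 3 + (u₂ : ℚ_[p]) * Y ^ 3 + (u₃ : ℚ_[p]) * Z ^ 3 = 0) ↔
    (∃ x : (ZMod p)ˣ, (x : ZMod p) ^ 3 = (u₂ : ZMod p) * (u₃ : ZMod p)⁻¹) :=
  local_solvable_bad_prime_general u₁ u₂ u₃ hcf₁ hco₁₂ hco₁₃ p hp3 hpu
end

section
/- Let (u_1, u_2, u_3) be pairwise coprime cubefree positive integers with v_3(u_1) = 1 (and hence 3 ∤ u_2 u_3). Then the equation u_1 X³ + u_2 Y³ + u_3 Z³ = 0 has a nontrivial solution over Q_3. -/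
/-
Write u₁ = 3m with 3 ∤ m; coprimality gives 3 ∤ u₂u₃. Seeking a solution of the form
(x u₂, -y, u₂) reduces the equation to y³ = N := (u₃ + u₁x³)u₂². If a is an integer prime to 3
with a³ ≡ N mod 27, then ‖a³ - N‖ ≤ 3⁻³ < ‖3a²‖², so Hensel's lemma turns a into a cube root
of N in ℤ₃; such an a exists as soon as N ≡ ±1 mod 9, since (±1 + 3t)³ ≡ ±1 + 9t mod 27.
Finally x³ ≡ x mod 3, so as x varies, u₁x³ ≡ 3mx³ moves N through its whole residue class
mod 3 (a unit class, that of u₃u₂²), and some x gives N ≡ ±1 mod 9.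
-/

open Polynomial

theorem Nat.exists_eq_mul_not_dvd_of_padicValNat_eq_one {p n : ℕ} [Fact p.Prime]
    (h : padicValNat p n = 1) : ∃ m, n = p * m ∧ ¬ p ∣ m := by
  have hn : n ≠ 0 := by rintro rfl; simp at h
  obtain ⟨m, rfl⟩ : p ∣ n := by simpa [h] using pow_padicValNat_dvd (p := p) (n := n)
  refine ⟨m, rfl, fun ⟨k, hk⟩ => pow_succ_padicValNat_not_dvd (p := p) hn ?_⟩
  rw [h, hk]
  exact ⟨k, by ring⟩

theorem ZMod.exists_cube_combination_mul_sq_eq_one_or_neg_one :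
    ∀ m b c : ZMod 9, 3 * m ≠ 0 → 3 * b ≠ 0 → 3 * c ≠ 0 →
      ∃ x : ZMod 9, (c + 3 * m * x ^ 3) * b ^ 2 = 1 ∨ (c + 3 * m * x ^ 3) * b ^ 2 = -1 := by
  decide

theorem Int.exists_cube_combination_mul_sq_modEq_one_or_neg_one {m b c : ℤ} (hm : ¬ 3 ∣ m)
    (hb : ¬ 3 ∣ b) (hc : ¬ 3 ∣ c) : ∃ x : ℤ,
      (c + 3 * m * x ^ 3) * b ^ 2 ≡ 1 [ZMOD 9] ∨ (c + 3 * m * x ^ 3) * b ^ 2 ≡ -1 [ZMOD 9] := by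
  have three_mul_ne_zero {n : ℤ} (hn : ¬ 3 ∣ n) : 3 * (n : ZMod 9) ≠ 0 := by
    rw [← Int.cast_ofNat, ← Int.cast_mul, Ne, ZMod.intCast_zmod_eq_zero_iff_dvd]
    omega
  obtain ⟨x, hx⟩ := ZMod.exists_cube_combination_mul_sq_eq_one_or_neg_one m b c
    (three_mul_ne_zero hm) (three_mul_ne_zero hb) (three_mul_ne_zero hc)
  refine ⟨x.val, ?_⟩
  have modEq_iff (k l : ℤ) : k ≡ l [ZMOD 9] ↔ (k : ZMod 9) = l :=
    (ZMod.intCast_eq_intCast_iff k l 9).symm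
  rw [modEq_iff, modEq_iff]
  push_cast
  simpa using hx

theorem Int.exists_cube_modEq_27 {w : ℤ} (hw : w ≡ 1 [ZMOD 9] ∨ w ≡ -1 [ZMOD 9]) :
    ∃ a : ℤ, ¬ 3 ∣ a ∧ a ^ 3 ≡ w [ZMOD 27] := by
  rcases hw with hw | hw <;> obtain ⟨t, ht⟩ := hw.symm.dvd
  · exact ⟨1 + 3 * t, by omega, Int.modEq_iff_dvd.2 ⟨-t ^ 2 - t ^ 3, by linear_combination ht⟩⟩
  · exact ⟨-1 + 3 * t, by omega, Int.modEq_iff_dvd.2 ⟨t ^ 2 - t ^ 3, by linear_combination ht⟩⟩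

theorem PadicInt.exists_cube_eq_of_cube_modEq_27 {w a : ℤ} (ha : ¬ 3 ∣ a)
    (h : a ^ 3 ≡ w [ZMOD 27]) : ∃ y : ℤ_[3], y ^ 3 = w := by
  let F : ℤ_[3][X] := X ^ 3 - C (w : ℤ_[3])
  have hF : ‖F.aeval (a : ℤ_[3])‖ ≤ 3 ^ (-3 : ℤ) := by
    have := PadicInt.norm_int_le_pow_iff_dvd (p := 3) (k := a ^ 3 - w) (n := 3)
    simpa [F] using this.2 h.symm.dvd
  have hF' : ‖F.derivative.aeval (a : ℤ_[3])‖ = 3⁻¹ := by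
    have h3 : ‖(3 : ℤ_[3])‖ = 3⁻¹ := by simpa using PadicInt.norm_p (p := 3)
    have ha1 : ‖(a : ℤ_[3])‖ = 1 :=
      PadicInt.norm_intCast_eq_one_iff.2 ((Int.prime_three.coprime_iff_not_dvd).2 ha).symm
    have hderiv : F.derivative.aeval (a : ℤ_[3]) = 3 * a ^ 2 := by norm_num [F]
    rw [hderiv, norm_mul, norm_pow, h3, ha1, one_pow, mul_one]
  obtain ⟨y, hy, -⟩ :=
    hensels_lemma (F := F) (a := a) (by rw [hF']; exact hF.trans_lt (by norm_num))
  exact ⟨y, by simpa [F, sub_eq_zero] using hy⟩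

theorem local_solvable_three_val_one_general (u₁ u₂ u₃ : ℕ)
    (hco₁₂ : Nat.Coprime u₁ u₂) (hco₁₃ : Nat.Coprime u₁ u₃)
    (hval : padicValNat 3 u₁ = 1) :
    ∃ X Y Z : ℚ_[3], (X, Y, Z) ≠ (0, 0, 0) ∧
      (u₁ : ℚ_[3]) * X ^ 3 + (u₂ : ℚ_[3]) * Y ^ 3 + (u₃ : ℚ_[3]) * Z ^ 3 = 0 := by
  obtain ⟨m, rfl, hm⟩ := Nat.exists_eq_mul_not_dvd_of_padicValNat_eq_one hval
  have hu₂ : ¬ 3 ∣ u₂ := fun h => by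
    simpa using Nat.eq_one_of_dvd_coprimes hco₁₂ (dvd_mul_right 3 m) h
  have hu₃ : ¬ 3 ∣ u₃ := fun h => by
    simpa using Nat.eq_one_of_dvd_coprimes hco₁₃ (dvd_mul_right 3 m) h
  obtain ⟨x, hx⟩ := Int.exists_cube_combination_mul_sq_modEq_one_or_neg_one (m := m) (b := u₂)
    (c := u₃) (by exact_mod_cast hm) (by exact_mod_cast hu₂) (by exact_mod_cast hu₃)
  obtain ⟨a, ha, ha_cube⟩ := Int.exists_cube_modEq_27 hx
  obtain ⟨y, hy⟩ := PadicInt.exists_cube_eq_of_cube_modEq_27 ha ha_cube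
  have hy' : (y : ℚ_[3]) ^ 3 = (u₃ + 3 * m * x ^ 3) * u₂ ^ 2 := by
    exact_mod_cast congrArg ((↑) : ℤ_[3] → ℚ_[3]) hy
  refine ⟨x * u₂, -y, u₂, by simp [show u₂ ≠ 0 by rintro rfl; simp at hu₂], ?_⟩
  push_cast
  linear_combination -(u₂ : ℚ_[3]) * hy'

/-- for pairwise coprime cubefree positive integers `u₁, u₂, u₃` with
`v₃(u₁) = 1`, the equation `u₁X³ + u₂Y³ + u₃Z³ = 0` has a nontrivial solution in `ℚ₃`. -/
theorem local_solvable_three_val_one (u₁ u₂ u₃ : ℕ)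
    (h₁ : 0 < u₁) (h₂ : 0 < u₂) (h₃ : 0 < u₃)
    (hcf₁ : ∀ p : ℕ, p.Prime → ¬ p ^ 3 ∣ u₁)
    (hcf₂ : ∀ p : ℕ, p.Prime → ¬ p ^ 3 ∣ u₂)
    (hcf₃ : ∀ p : ℕ, p.Prime → ¬ p ^ 3 ∣ u₃)
    (hco₁₂ : Nat.Coprime u₁ u₂) (hco₁₃ : Nat.Coprime u₁ u₃) (hco₂₃ : Nat.Coprime u₂ u₃)
    (hval : padicValNat 3 u₁ = 1) :
    ∃ X Y Z : ℚ_[3], (X, Y, Z) ≠ (0, 0, 0) ∧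
      (u₁ : ℚ_[3]) * X ^ 3 + (u₂ : ℚ_[3]) * Y ^ 3 + (u₃ : ℚ_[3]) * Z ^ 3 = 0 :=
  local_solvable_three_val_one_general u₁ u₂ u₃ hco₁₂ hco₁₃ hval
end

section
/- Let (u_1, u_2, u_3) be pairwise coprime cubefree positive integers with 3 ∤ u_1 u_2 u_3. Then u_1 X³ + u_2 Y³ + u_3 Z³ = 0 has a nontrivial solution over Q_3 if and only if u_i/u_j ≡ ±1 mod 9 for some pair i ≠ j. -/
/-!
Scale a nontrivial solution so that it is 3-adically integral with a unit coordinate, and reduce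
modulo 9. Cubes modulo 9 are 0 or ±1, with ±1 exactly for units, so `a s + b t + c r ≡ 0 mod 9`
with unit coefficients and signs `s, t, r` not all zero forces `a ≡ ±b`, `a ≡ ±c` or `b ≡ ±c`
(a finite check). Conversely, if `a ≡ ±b mod 9` then `-b/a ≡ ±1 mod 9`, and such a unit is a cube
in `ℤ₃` by Hensel's lemma: `1 + 3k` is a cube root of `1 + 9k` modulo 27, which is precise
enough because the derivative `3X²` has valuation 1. This gives the solution `(X, 1, 0)`.
-/

open PadicInt Polynomial

def EqOrEqNeg {R : Type*} [Neg R] (a b : R) : Prop := a = b ∨ a = -b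

lemma ZMod.exists_signType_eq_pow_three (x : ZMod 9) : ∃ s : SignType, x ^ 3 = s := by
  revert x; decide

lemma ZMod.eqOrEqNeg_of_units_mul_signType_add_eq_zero (a b c : (ZMod 9)ˣ) (s t r : SignType)
    (hstr : s ≠ 0 ∨ t ≠ 0 ∨ r ≠ 0) (h : (a : ZMod 9) * s + b * t + c * r = 0) :
    EqOrEqNeg (a : ZMod 9) b ∨ EqOrEqNeg (a : ZMod 9) c ∨ EqOrEqNeg (b : ZMod 9) c := by
  unfold EqOrEqNeg
  revert a b c s t r; decide

lemma Padic.exists_eq_mul_isUnit {p : ℕ} [Fact p.Prime] {X Y Z : ℚ_[p]}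
    (h : (X, Y, Z) ≠ (0, 0, 0)) :
    ∃ (w : ℚ_[p]) (x y z : ℤ_[p]), w ≠ 0 ∧ X = w * x ∧ Y = w * y ∧ Z = w * z ∧
      (IsUnit x ∨ IsUnit y ∨ IsUnit z) := by
  classical
  obtain ⟨w, hw, hmax⟩ := Finset.exists_max_image {X, Y, Z} norm (by simp)
  simp only [Finset.mem_insert, Finset.mem_singleton, forall_eq_or_imp, forall_eq] at hw hmax
  have hw0 : w ≠ 0 := by
    rintro rfl
    simp_all
  have hdiv : ∀ v : ℚ_[p], ‖v‖ ≤ ‖w‖ → ∃ x : ℤ_[p], v = w * x ∧ (w = v → IsUnit x) := by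
    intro v hv
    refine ⟨⟨v / w, by rw [norm_div]; exact div_le_one_of_le₀ hv (norm_nonneg _)⟩, ?_, ?_⟩
    · simp [mul_div_cancel₀ _ hw0]
    · rintro rfl
      exact isUnit_iff.2 (show ‖w / w‖ = 1 by simp [hw0])
  obtain ⟨x, hX, hx⟩ := hdiv X hmax.1
  obtain ⟨y, hY, hy⟩ := hdiv Y hmax.2.1
  obtain ⟨z, hZ, hz⟩ := hdiv Z hmax.2.2
  exact ⟨w, x, y, z, hw0, hX, hY, hZ, hw.imp hx (Or.imp hy hz)⟩

lemma PadicInt.toZModPow_eq_one_iff_dvd {p : ℕ} [Fact p.Prime] (n : ℕ) (t : ℤ_[p]) :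
    toZModPow n t = 1 ↔ (p : ℤ_[p]) ^ n ∣ t - 1 := by
  rw [← Ideal.mem_span_singleton, ← ker_toZModPow, RingHom.mem_ker, map_sub, map_one, sub_eq_zero]

lemma PadicInt.exists_pow_three_eq_of_toZModPow_two_eq_one {t : ℤ_[3]} (h : toZModPow 2 t = 1) :
    ∃ r : ℤ_[3], r ^ 3 = t := by
  obtain ⟨k, hk⟩ := (toZModPow_eq_one_iff_dvd 2 t).1 h
  push_cast at hk
  have h3 : ‖(3 : ℤ_[3])‖ = 3⁻¹ := by simpa using norm_p (p := 3)
  have h3k : ‖3 * k‖ < ‖(1 : ℤ_[3])‖ := by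
    rw [norm_mul, h3, norm_one]; linarith [norm_le_one k]
  have ha_norm : ‖1 + 3 * k‖ = 1 := by
    rw [IsUltrametricDist.norm_add_eq_max_of_norm_ne_norm h3k.ne', max_eq_left h3k.le, norm_one]
  set a : ℤ_[3] := 1 + 3 * k
  have hF : aeval a (X ^ 3 - C t) = 3 ^ 3 * (k ^ 2 + k ^ 3) := by
    rw [map_sub, map_pow, aeval_X, aeval_C, Algebra.algebraMap_self, RingHom.id_apply,
      eq_add_of_sub_eq hk]
    ring
  have hF' : aeval a (derivative (X ^ 3 - C t)) = 3 * a ^ 2 := by simp; norm_num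
  obtain ⟨r, hr, -⟩ := hensels_lemma (F := X ^ 3 - C t) (a := a) <| by
    rw [hF, hF']
    calc ‖(3 : ℤ_[3]) ^ 3 * (k ^ 2 + k ^ 3)‖ ≤ 3⁻¹ ^ 3 := by
          rw [norm_mul, norm_pow, h3]
          exact mul_le_of_le_one_right (by positivity) (norm_le_one _)
      _ < ‖(3 : ℤ_[3]) * a ^ 2‖ ^ 2 := by
          rw [norm_mul, norm_pow, h3, ha_norm]
          norm_num
  exact ⟨r, by simpa [sub_eq_zero] using hr⟩

lemma PadicInt.exists_mul_pow_three_add_eq_zero {a b : ℤ_[3]} (ha : IsUnit a)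
    (h : EqOrEqNeg (toZModPow 2 a) (toZModPow 2 b)) : ∃ x : ℤ_[3], a * x ^ 3 + b = 0 := by
  obtain ⟨u, rfl⟩ := ha
  have hu : toZModPow 2 (u : ℤ_[3]) * toZModPow 2 (↑u⁻¹ : ℤ_[3]) = 1 := by
    rw [← map_mul, u.mul_inv, map_one]
  have hroot : ∃ x : ℤ_[3], x ^ 3 = -b * ↑u⁻¹ := by
    rcases h with h | h
    · obtain ⟨r, hr⟩ := exists_pow_three_eq_of_toZModPow_two_eq_one (t := b * ↑u⁻¹)
        (by rw [map_mul, ← h, hu])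
      exact ⟨-r, by rw [Odd.neg_pow (by decide), hr, neg_mul]⟩
    · refine exists_pow_three_eq_of_toZModPow_two_eq_one ?_
      rw [map_mul, map_neg, ← neg_eq_iff_eq_neg.2 h, neg_neg, hu]
  obtain ⟨x, hx⟩ := hroot
  exact ⟨x, by linear_combination ↑u * hx - b * u.mul_inv⟩

lemma PadicInt.eqOrEqNeg_of_mul_pow_three_add_eq_zero {a b c x y z : ℤ_[3]}
    (ha : IsUnit a) (hb : IsUnit b) (hc : IsUnit c) (hxyz : IsUnit x ∨ IsUnit y ∨ IsUnit z)
    (h : a * x ^ 3 + b * y ^ 3 + c * z ^ 3 = 0) :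
    EqOrEqNeg (toZModPow 2 a) (toZModPow 2 b) ∨ EqOrEqNeg (toZModPow 2 a) (toZModPow 2 c) ∨
      EqOrEqNeg (toZModPow 2 b) (toZModPow 2 c) := by
  have h9 := congrArg (toZModPow 2) h
  simp only [map_add, map_mul, map_pow, map_zero] at h9
  obtain ⟨s, hs⟩ := ZMod.exists_signType_eq_pow_three (toZModPow 2 x)
  obtain ⟨t, ht⟩ := ZMod.exists_signType_eq_pow_three (toZModPow 2 y)
  obtain ⟨r, hr⟩ := ZMod.exists_signType_eq_pow_three (toZModPow 2 z)
  rw [hs, ht, hr] at h9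
  have hsign : ∀ {v : ZMod 9} {s : SignType}, IsUnit v → v ^ 3 = s → s ≠ 0 := by
    rintro v s hv hvs rfl
    have : Fact (1 < 9) := ⟨by norm_num⟩
    exact (hv.pow 3).ne_zero (by simpa using hvs)
  have hsign_of_isUnit : ∀ {w : ℤ_[3]} {s : SignType}, IsUnit w → toZModPow 2 w ^ 3 = s → s ≠ 0 :=
    fun hw => hsign (hw.map (toZModPow 2))
  refine ZMod.eqOrEqNeg_of_units_mul_signType_add_eq_zero (ha.map _).unit (hb.map _).unit
    (hc.map _).unit s t r ?_ h9
  exact hxyz.imp (hsign_of_isUnit · hs) (Or.imp (hsign_of_isUnit · ht) (hsign_of_isUnit · hr))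

theorem PadicInt.exists_ne_zero_mul_pow_three_add_eq_zero_iff {a b c : ℤ_[3]}
    (ha : IsUnit a) (hb : IsUnit b) (hc : IsUnit c) :
    (∃ X Y Z : ℚ_[3], (X, Y, Z) ≠ (0, 0, 0) ∧ (a : ℚ_[3]) * X ^ 3 + b * Y ^ 3 + c * Z ^ 3 = 0) ↔
      EqOrEqNeg (toZModPow 2 a) (toZModPow 2 b) ∨ EqOrEqNeg (toZModPow 2 a) (toZModPow 2 c) ∨
        EqOrEqNeg (toZModPow 2 b) (toZModPow 2 c) := by
  constructor
  · rintro ⟨X, Y, Z, hne, h⟩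
    obtain ⟨w, x, y, z, hw, rfl, rfl, rfl, hxyz⟩ := Padic.exists_eq_mul_isUnit hne
    refine eqOrEqNeg_of_mul_pow_three_add_eq_zero ha hb hc hxyz ?_
    have : w ^ 3 * ((a * x ^ 3 + b * y ^ 3 + c * z ^ 3 : ℤ_[3]) : ℚ_[3]) = 0 := by
      push_cast; linear_combination h
    exact coe_eq_zero.1 ((mul_eq_zero.1 this).resolve_left (pow_ne_zero 3 hw))
  · rintro (h | h | h)
    · obtain ⟨x, hx⟩ := exists_mul_pow_three_add_eq_zero ha h
      exact ⟨x, 1, 0, by simp, by simpa using congrArg ((↑) : ℤ_[3] → ℚ_[3]) hx⟩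
    · obtain ⟨x, hx⟩ := exists_mul_pow_three_add_eq_zero ha h
      exact ⟨x, 0, 1, by simp, by simpa using congrArg ((↑) : ℤ_[3] → ℚ_[3]) hx⟩
    · obtain ⟨x, hx⟩ := exists_mul_pow_three_add_eq_zero hb h
      exact ⟨0, x, 1, by simp, by simpa using congrArg ((↑) : ℤ_[3] → ℚ_[3]) hx⟩

lemma PadicInt.isUnit_natCast_of_not_dvd {p : ℕ} [Fact p.Prime] {n : ℕ} (h : ¬ p ∣ n) :
    IsUnit (n : ℤ_[p]) :=
  isUnit_iff.2 (norm_natCast_eq_one_iff.2 ((Nat.Prime.coprime_iff_not_dvd Fact.out).2 h))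

theorem local_solvable_at_three_general (u₁ u₂ u₃ : ℕ)
    (h3 : ¬ 3 ∣ u₁ * u₂ * u₃) :
    (∃ X Y Z : ℚ_[3], (X, Y, Z) ≠ (0, 0, 0) ∧
      (u₁ : ℚ_[3]) * X ^ 3 + (u₂ : ℚ_[3]) * Y ^ 3 + (u₃ : ℚ_[3]) * Z ^ 3 = 0) ↔
    ((u₁ : ℤ) ≡ (u₂ : ℤ) [ZMOD 9] ∨ (u₁ : ℤ) ≡ -(u₂ : ℤ) [ZMOD 9] ∨
     (u₁ : ℤ) ≡ (u₃ : ℤ) [ZMOD 9] ∨ (u₁ : ℤ) ≡ -(u₃ : ℤ) [ZMOD 9] ∨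
     (u₂ : ℤ) ≡ (u₃ : ℤ) [ZMOD 9] ∨ (u₂ : ℤ) ≡ -(u₃ : ℤ) [ZMOD 9]) := by
  simp only [Nat.prime_three.dvd_mul, not_or] at h3
  obtain ⟨⟨h3₁, h3₂⟩, h3₃⟩ := h3
  have key := exists_ne_zero_mul_pow_three_add_eq_zero_iff (isUnit_natCast_of_not_dvd h3₁)
    (isUnit_natCast_of_not_dvd h3₂) (isUnit_natCast_of_not_dvd h3₃)
  simp only [EqOrEqNeg, map_natCast, coe_natCast, or_assoc] at key
  have hmod : ∀ a b : ℤ, a ≡ b [ZMOD 9] ↔ (a : ZMod 9) = b :=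
    fun a b => (ZMod.intCast_eq_intCast_iff a b 9).symm
  rw [key]
  simp only [hmod, Int.cast_natCast, Int.cast_neg]

/-- for pairwise coprime cubefree positive integers `u₁, u₂, u₃` all
coprime to `3`, the equation `u₁X³ + u₂Y³ + u₃Z³ = 0` has a nontrivial solution in
`ℚ₃` iff `u_i ≡ ±u_j mod 9` for some `i ≠ j`. -/
theorem local_solvable_at_three (u₁ u₂ u₃ : ℕ)
    (h₁ : 0 < u₁) (h₂ : 0 < u₂) (h₃ : 0 < u₃)
    (hcf₁ : ∀ p : ℕ, p.Prime → ¬ p ^ 3 ∣ u₁)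
    (hcf₂ : ∀ p : ℕ, p.Prime → ¬ p ^ 3 ∣ u₂)
    (hcf₃ : ∀ p : ℕ, p.Prime → ¬ p ^ 3 ∣ u₃)
    (hco₁₂ : Nat.Coprime u₁ u₂) (hco₁₃ : Nat.Coprime u₁ u₃) (hco₂₃ : Nat.Coprime u₂ u₃)
    (h3 : ¬ 3 ∣ u₁ * u₂ * u₃) :
    (∃ X Y Z : ℚ_[3], (X, Y, Z) ≠ (0, 0, 0) ∧
      (u₁ : ℚ_[3]) * X ^ 3 + (u₂ : ℚ_[3]) * Y ^ 3 + (u₃ : ℚ_[3]) * Z ^ 3 = 0) ↔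
    ((u₁ : ℤ) ≡ (u₂ : ℤ) [ZMOD 9] ∨ (u₁ : ℤ) ≡ -(u₂ : ℤ) [ZMOD 9] ∨
     (u₁ : ℤ) ≡ (u₃ : ℤ) [ZMOD 9] ∨ (u₁ : ℤ) ≡ -(u₃ : ℤ) [ZMOD 9] ∨
     (u₂ : ℤ) ≡ (u₃ : ℤ) [ZMOD 9] ∨ (u₂ : ℤ) ≡ -(u₃ : ℤ) [ZMOD 9]) :=
  local_solvable_at_three_general u₁ u₂ u₃ h3
end

section
/- Let Ω(N) = e·3^k(log log N + B) for constants k ≥ 1 and B > 0. Then the sum over positive integers n ≤ N with ω(n) ≥ Ω(N) of 3^{k ω(n)} is O_k(N / log N), where ω(n) denotes the number of distinct prime factors of n. -/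
/-!
Rankin's trick: with `y = e·3^k`, on `ω(n) ≥ y (log log N + B)` we have
`3^{kω(n)} ≤ e^{-y (log log N + B)} y^{ω(n)}`, so it suffices to bound `∑_{n ≤ N} y^{ω(n)}`.
Expanding `y^{ω(n)} = ∑_{S ⊆ primeFactors n} (y - 1)^{|S|}` and counting the multiples of `∏ S`
bounds this by `N ∏_{p ≤ N} (1 + (y - 1)/p) ≤ N exp((y - 1) ∑_{p ≤ N} 1/p)`. Mertens' estimate
`∑_{p ≤ N} 1/p ≤ log log N + O(1)`, obtained by Abel summation from
`∑_{p ≤ N} log p / p ≤ log N + log 4` (Chebyshev's `θ(N) ≤ N log 4`), then leaves exactly one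
factor `e^{-log log N} = 1 / log N`.
-/

open Real Finset

theorem sum_log_primeFactors_le_log (n : ℕ) : ∑ p ∈ n.primeFactors, log p ≤ log n := by
  rcases eq_or_ne n 0 with rfl | hn
  · simp
  have hprod_le : ∏ p ∈ n.primeFactors, p ≤ n :=
    Nat.le_of_dvd (Nat.pos_of_ne_zero hn) (Nat.prod_primeFactors_dvd n)
  rw [← log_prod fun p hp => by exact_mod_cast (Nat.prime_of_mem_primeFactors hp).ne_zero,
    ← Nat.cast_prod]
  exact log_le_log (by exact_mod_cast Nat.pos_of_ne_zero (prod_ne_zero_iff.2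
    fun p hp => (Nat.prime_of_mem_primeFactors hp).ne_zero)) (by exact_mod_cast hprod_le)

theorem sum_Icc_sum_primeFactors {M : Type*} [AddCommMonoid M] (N : ℕ) (f : ℕ → M) :
    ∑ n ∈ Icc 1 N, ∑ p ∈ n.primeFactors, f p = ∑ p ∈ Nat.primesLE N, (N / p) • f p := by
  rw [sum_comm' (t' := Nat.primesLE N) (s' := fun p => {n ∈ Ioc 0 N | p ∣ n})]
  · simp_rw [sum_const, Nat.Ioc_filter_dvd_card_eq_div]
  · intro n p
    simp only [mem_Icc, Nat.mem_primeFactors, mem_filter, mem_Ioc, Nat.mem_primesLE]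
    constructor
    · rintro ⟨⟨hn1, hnN⟩, hp, hpn, -⟩
      exact ⟨⟨⟨hn1, hnN⟩, hpn⟩, (Nat.le_of_dvd hn1 hpn).trans hnN, hp⟩
    · rintro ⟨⟨⟨hn1, hnN⟩, hpn⟩, -, hp⟩
      exact ⟨⟨hn1, hnN⟩, hp, hpn, by omega⟩

/-- Mertens' first theorem, upper bound. -/
theorem sum_primesLE_log_div_le (N : ℕ) :
    ∑ p ∈ Nat.primesLE N, log p / p ≤ log N + log 4 := by
  rcases eq_or_ne N 0 with rfl | hN
  · simpa [Nat.primesLE_zero] using log_nonneg (by norm_num)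
  have hN_pos : (0 : ℝ) < N := by exact_mod_cast Nat.pos_of_ne_zero hN
  have hfloor : ∀ p ∈ Nat.primesLE N, ((N : ℝ) / p - 1) * log p ≤ (N / p : ℕ) * log p := by
    intro p _
    gcongr
    rw [← Nat.floor_div_eq_div (K := ℝ)]
    exact (Nat.sub_one_lt_floor _).le
  have hlog_sum : ∑ n ∈ Icc 1 N, log n ≤ N * log N := by
    simpa using sum_le_card_nsmul (Icc 1 N) (fun n : ℕ => log n) (log N) fun n hn =>
      log_le_log (by exact_mod_cast (mem_Icc.1 hn).1) (by exact_mod_cast (mem_Icc.1 hn).2)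
  have key : N * ∑ p ∈ Nat.primesLE N, log p / p - Chebyshev.theta N ≤ N * log N :=
    calc N * ∑ p ∈ Nat.primesLE N, log p / p - Chebyshev.theta N
        = ∑ p ∈ Nat.primesLE N, ((N : ℝ) / p - 1) * log p := by
          rw [Chebyshev.theta_eq_sum_primesLE_log, mul_sum, ← sum_sub_distrib]
          congr! 1 with p
          ring
      _ ≤ ∑ p ∈ Nat.primesLE N, (N / p : ℕ) * log p := sum_le_sum hfloor
      _ = ∑ n ∈ Icc 1 N, ∑ p ∈ n.primeFactors, log p := by
          simp_rw [sum_Icc_sum_primeFactors, nsmul_eq_mul]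
      _ ≤ ∑ n ∈ Icc 1 N, log n := sum_le_sum fun n _ => sum_log_primeFactors_le_log n
      _ ≤ N * log N := hlog_sum
  have htheta := Chebyshev.theta_le_log4_mul_x hN_pos.le
  nlinarith

theorem inv_log_sub_inv_log_mul_log_le {a b : ℝ} (ha : 1 < a) (hab : a ≤ b) :
    ((log a)⁻¹ - (log b)⁻¹) * log a ≤ log (log b) - log (log a) := by
  have hla : 0 < log a := log_pos ha
  have hlb : 0 < log b := hla.trans_le (log_le_log (by linarith) hab)
  have h := one_sub_inv_le_log_of_pos (div_pos hlb hla)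
  rw [log_div hlb.ne' hla.ne', inv_div] at h
  calc ((log a)⁻¹ - (log b)⁻¹) * log a = 1 - log a / log b := by field_simp
    _ ≤ _ := h

theorem sum_primesLE_inv_eq_abel {N : ℕ} (hN : 2 ≤ N) :
    ∑ p ∈ Nat.primesLE N, (p : ℝ)⁻¹ = (log N)⁻¹ * ∑ p ∈ Nat.primesLE N, log p / p +
      ∑ i ∈ Ico 2 N, ((log i)⁻¹ - (log (i + 1 : ℕ))⁻¹) * ∑ p ∈ Nat.primesLE i, log p / p := by
  set a : ℕ → ℝ := fun i => if i.Prime then log i / i else 0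
  have hpartial : ∀ i, ∑ j ∈ range (i + 1), a j = ∑ p ∈ Nat.primesLE i, log p / p := fun i => by
    simp only [a, ← sum_filter]; rfl
  have hsum : ∑ p ∈ Nat.primesLE N, (p : ℝ)⁻¹ = ∑ i ∈ Ico 2 (N + 1), (log i)⁻¹ • a i := by
    rw [Nat.primesLE_eq_filter_Icc_two, ← Finset.Ico_add_one_right_eq_Icc, sum_filter]
    refine sum_congr rfl fun i _ => ?_
    by_cases hi : i.Prime
    · have : log i ≠ 0 := (log_pos (by exact_mod_cast hi.one_lt)).ne'
      simp only [hi, if_true, a, smul_eq_mul]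
      field_simp
    · simp [hi, a]
  rw [hsum, sum_Ico_by_parts _ a (by omega)]
  simp only [hpartial, Nat.primesLE_one, sum_empty, Nat.add_sub_cancel, smul_eq_mul, mul_zero,
    sub_zero]
  rw [sub_eq_add_neg, ← sum_neg_distrib]
  exact congrArg _ (sum_congr rfl fun i _ => by ring)

/-- Mertens' second theorem, upper bound, with constant `1 + log 4 / log 2 - log log 2`. -/
theorem sum_primesLE_inv_le {N : ℕ} (hN : 2 ≤ N) :
    ∑ p ∈ Nat.primesLE N, (p : ℝ)⁻¹ ≤ log (log N) + (3 - log (log 2)) := by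
  -- Against the bound `log i + log 4` for the partial sums, each Abel summand telescopes in `F`.
  set F : ℕ → ℝ := fun i => log (log i) - log 4 * (log i)⁻¹
  have hterm : ∀ i ∈ Ico 2 N, ((log i)⁻¹ - (log (i + 1 : ℕ))⁻¹) *
      ∑ p ∈ Nat.primesLE i, log p / p ≤ F (i + 1) - F i := by
    intro i hi
    have hi2 : (2 : ℝ) ≤ i := by exact_mod_cast (mem_Ico.1 hi).1
    have hi_succ : (i : ℝ) ≤ (i + 1 : ℕ) := by push_cast; linarith
    have hweight : 0 ≤ (log i)⁻¹ - (log (i + 1 : ℕ))⁻¹ :=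
      sub_nonneg.2 (inv_anti₀ (log_pos (by linarith)) (log_le_log (by linarith) hi_succ))
    calc ((log i)⁻¹ - (log (i + 1 : ℕ))⁻¹) * ∑ p ∈ Nat.primesLE i, log p / p
        ≤ ((log i)⁻¹ - (log (i + 1 : ℕ))⁻¹) * (log i + log 4) :=
          mul_le_mul_of_nonneg_left (sum_primesLE_log_div_le i) hweight
      _ ≤ F (i + 1) - F i := by
          have := inv_log_sub_inv_log_mul_log_le (by linarith) hi_succ
          simp only [F]
          linarith
  have hlogN : 0 < log N := log_pos (by exact_mod_cast hN)
  have hhead : (log N)⁻¹ * ∑ p ∈ Nat.primesLE N, log p / p ≤ 1 + log 4 * (log N)⁻¹ :=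
    calc (log N)⁻¹ * ∑ p ∈ Nat.primesLE N, log p / p ≤ (log N)⁻¹ * (log N + log 4) :=
          mul_le_mul_of_nonneg_left (sum_primesLE_log_div_le N) (inv_nonneg.2 hlogN.le)
      _ = 1 + log 4 * (log N)⁻¹ := by field_simp
  have hF2 : F 2 = log (log 2) - 2 := by
    have : log 2 ≠ 0 := (log_pos one_lt_two).ne'
    simp only [F, show (4 : ℝ) = 2 ^ 2 by norm_num, log_pow]
    push_cast
    field_simp
  rw [sum_primesLE_inv_eq_abel hN]
  have htele := (sum_le_sum hterm).trans (sum_Ico_sub F hN).le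
  simp only [F] at htele hF2
  linarith

theorem subset_primeFactors_iff_prod_dvd {S : Finset ℕ} (hS : ∀ p ∈ S, p.Prime) {n : ℕ}
    (hn : n ≠ 0) : S ⊆ n.primeFactors ↔ ∏ p ∈ S, p ∣ n := by
  simpa only [Nat.primeFactors_prod hS] using
    (Nat.prod_primeFactors_dvd_iff (n := ∏ p ∈ S, p) hn).symm

theorem card_filter_subset_primeFactors {S : Finset ℕ} (hS : ∀ p ∈ S, p.Prime) (N : ℕ) :
    #{n ∈ Icc 1 N | S ⊆ n.primeFactors} = N / ∏ p ∈ S, p := by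
  rw [← Nat.Ioc_filter_dvd_card_eq_div]
  congr 1
  exact filter_congr fun n hn =>
    subset_primeFactors_iff_prod_dvd hS (Nat.pos_iff_ne_zero.1 (mem_Ioc.1 hn).1)

theorem one_add_pow_card_primeFactors_eq {R : Type*} [CommSemiring R] (z : R) {n N : ℕ}
    (hn : n ≤ N) : (1 + z) ^ #n.primeFactors =
      ∑ S ∈ (Nat.primesLE N).powerset, if S ⊆ n.primeFactors then z ^ #S else 0 := by
  have hsub : n.primeFactors ⊆ Nat.primesLE N := fun p hp =>
    Nat.mem_primesLE.2 ⟨(Nat.le_of_mem_primeFactors hp).trans hn, Nat.prime_of_mem_primeFactors hp⟩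
  rw [← sum_filter, ← prod_const, prod_one_add]
  refine sum_congr ?_ fun S _ => prod_const z
  ext S
  simpa using fun h : S ⊆ n.primeFactors => h.trans hsub

theorem sum_one_add_pow_card_primeFactors_le {z : ℝ} (hz : 0 ≤ z) (N : ℕ) :
    ∑ n ∈ Icc 1 N, (1 + z) ^ #n.primeFactors ≤ N * ∏ p ∈ Nat.primesLE N, (1 + z / p) := by
  have hcount : ∀ S ∈ (Nat.primesLE N).powerset,
      ∑ n ∈ Icc 1 N, (if S ⊆ n.primeFactors then z ^ #S else 0) ≤ N * ∏ p ∈ S, z / p := by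
    intro S hS
    have hS_prime : ∀ p ∈ S, p.Prime := fun p hp =>
      Nat.prime_of_mem_primesLE (mem_powerset.1 hS hp)
    rw [← sum_filter, sum_const, nsmul_eq_mul, card_filter_subset_primeFactors hS_prime,
      prod_div_distrib, prod_const, mul_div_left_comm, ← Nat.cast_prod, mul_comm]
    exact mul_le_mul_of_nonneg_left Nat.cast_div_le (pow_nonneg hz _)
  calc ∑ n ∈ Icc 1 N, (1 + z) ^ #n.primeFactors
      = ∑ S ∈ (Nat.primesLE N).powerset, ∑ n ∈ Icc 1 N,
          (if S ⊆ n.primeFactors then z ^ #S else 0) := by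
        rw [sum_comm]
        exact sum_congr rfl fun n hn =>
          one_add_pow_card_primeFactors_eq z (mem_Icc.1 hn).2
    _ ≤ ∑ S ∈ (Nat.primesLE N).powerset, N * ∏ p ∈ S, z / p := sum_le_sum hcount
    _ = N * ∏ p ∈ Nat.primesLE N, (1 + z / p) := by rw [← mul_sum, prod_one_add]

theorem sum_one_add_pow_card_primeFactors_le_exp {z : ℝ} (hz : 0 ≤ z) {N : ℕ} (hN : 2 ≤ N) :
    ∑ n ∈ Icc 1 N, (1 + z) ^ #n.primeFactors ≤
      N * exp (z * (log (log N) + (3 - log (log 2)))) := by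
  refine (sum_one_add_pow_card_primeFactors_le hz N).trans
    (mul_le_mul_of_nonneg_left ?_ N.cast_nonneg)
  calc ∏ p ∈ Nat.primesLE N, (1 + z / p)
      ≤ exp (∑ p ∈ Nat.primesLE N, z / p) := prod_one_add_le_exp_sum _ fun p => by positivity
    _ = exp (z * ∑ p ∈ Nat.primesLE N, (p : ℝ)⁻¹) := by simp only [mul_sum, div_eq_mul_inv]
    _ ≤ _ := by gcongr; exact sum_primesLE_inv_le hN

theorem ite_le_exp_neg_mul_pow {x : ℝ} (hx : 0 ≤ x) (L : ℝ) (w : ℕ) :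
    (if L ≤ w then x ^ w else 0) ≤ exp (-L) * (exp 1 * x) ^ w := by
  split_ifs with hLw
  · calc x ^ w ≤ exp (w - L) * x ^ w :=
          le_mul_of_one_le_left (pow_nonneg hx w) (one_le_exp (by linarith))
      _ = exp (-L) * (exp 1 * x) ^ w := by
          rw [mul_pow, ← exp_nat_mul, mul_one, ← mul_assoc, ← exp_add, neg_add_eq_sub]
  · positivity

theorem sum_large_omega_bound_general (k : ℕ) (B : ℝ) :
    ∃ C : ℝ, 0 < C ∧ ∀ N : ℕ, 2 ≤ N →
      (∑ n ∈ Finset.Icc 1 N,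
        if Real.exp 1 * 3 ^ k * (Real.log (Real.log N) + B) ≤ (n.primeFactors.card : ℝ)
        then (3 : ℝ) ^ (k * n.primeFactors.card) else 0) ≤
      C * N / Real.log N := by
  set y : ℝ := exp 1 * 3 ^ k
  have hy : 1 ≤ y :=
    one_le_mul_of_one_le_of_one_le (one_le_exp zero_le_one) (one_le_pow₀ (by norm_num))
  refine ⟨exp ((y - 1) * (3 - log (log 2)) - y * B), exp_pos _, fun N hN => ?_⟩
  have hlogN : 0 < log N := log_pos (by exact_mod_cast hN)
  calc _ ≤ ∑ n ∈ Icc 1 N, exp (-(y * (log (log N) + B))) * (1 + (y - 1)) ^ #n.primeFactors :=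
        sum_le_sum fun n _ => by
          rw [pow_mul, add_sub_cancel]
          exact ite_le_exp_neg_mul_pow (by positivity) _ _
    _ ≤ exp (-(y * (log (log N) + B))) *
          (N * exp ((y - 1) * (log (log N) + (3 - log (log 2))))) := by
        rw [← mul_sum]
        gcongr
        exact sum_one_add_pow_card_primeFactors_le_exp (by linarith) hN
    _ = exp ((y - 1) * (3 - log (log 2)) - y * B) * N * exp (-log (log N)) := by
        rw [mul_left_comm, ← exp_add, mul_right_comm _ (N : ℝ), ← exp_add, mul_comm]
        congr 2
        ring
    _ = _ := by rw [exp_neg, exp_log hlogN, div_eq_mul_inv]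

/-- with `Ω(N) = e·3^k(log log N + B)`, the sum over `n ≤ N` with
`ω(n) ≥ Ω(N)` of `3^{kω(n)}` is `O_k(N / log N)`. -/
theorem sum_large_omega_bound (k : ℕ) (hk : 1 ≤ k) (B : ℝ) (hB : 0 < B) :
    ∃ C : ℝ, 0 < C ∧ ∀ N : ℕ, 2 ≤ N →
      (∑ n ∈ Finset.Icc 1 N,
        if Real.exp 1 * 3 ^ k * (Real.log (Real.log N) + B) ≤ (n.primeFactors.card : ℝ)
        then (3 : ℝ) ^ (k * n.primeFactors.card) else 0) ≤
      C * N / Real.log N :=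
  sum_large_omega_bound_general k B
end
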